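/- arXiv:2112.05592 — 9 statements merged into one kernel-verified Lean document; each statement's English description precedes it below -/
import Mathlib

section
/- For integers q ≥ 2, L ≥ 1, and a real r ∈ [0, L/(L+1)] with rn ∈ ℕ, every (r,L) list-decodable code C ⊆ [q]^n has size at most L · q^(n - ⌊((L+1)/L)·rn⌋). -/
/-!
Puncture the code on a set `S` of `m = ⌊(L+1)·rn/L⌋` coordinates. If `|C| > L·q^(n-m)`, then by
pigeonhole some `L+1` codewords agree off `S`. Inside `S` these codewords can be given pairwise
disjoint blocks of `s = m - rn` coordinates each, since `(L+1)·s ≤ m`; the word `v` that copies the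
`i`-th codeword on its block and their common values off `S` is within distance `m - s = rn` of
all `L+1` of them, contradicting list decodability.
-/

open Finset

section Hamming

variable {ι α : Type*} [DecidableEq α]

theorem hammingDist_add_card_agree_eq_of_eq_off [Fintype ι] {S : Finset ι} {w v : ι → α}
    (h : ∀ j ∉ S, w j = v j) : hammingDist w v + #{j ∈ S | w j = v j} = #S := by
  have hdist : hammingDist w v = #{j ∈ S | w j ≠ v j} := by
    rw [hammingDist]
    congr 1
    ext j
    by_cases hj : j ∈ S <;> simp [hj, h]
  rw [hdist, add_comm, card_filter_add_card_filter_not]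

theorem exists_eq_off_forall_le_card_agree [DecidableEq ι] (u : ι → α) (W : Finset (ι → α)) :
    ∀ (S : Finset ι) (s : ℕ), #W * s ≤ #S →
      ∃ v : ι → α, (∀ j ∉ S, v j = u j) ∧ ∀ w ∈ W, s ≤ #{j ∈ S | w j = v j} := by
  classical
  induction W using Finset.induction_on with
  | empty => exact fun S s _ => ⟨u, fun _ _ => rfl, by simp⟩
  | insert a W ha ih =>
    intro S s hs
    rw [card_insert_of_notMem ha, add_mul, one_mul] at hs
    obtain ⟨B, hBS, hB⟩ := exists_subset_card_eq (show s ≤ #S by omega)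
    obtain ⟨v, hvu, hvW⟩ := ih (S \ B) s (by rw [card_sdiff_of_subset hBS]; omega)
    refine ⟨B.piecewise a v, fun j hj => ?_, forall_mem_insert _ _ _ |>.2 ⟨?_, fun w hw => ?_⟩⟩
    · rw [piecewise_eq_of_notMem _ _ _ fun hjB => hj (hBS hjB)]
      exact hvu j fun hjS => hj (mem_sdiff.1 hjS).1
    · calc s = #B := hB.symm
        _ ≤ #{j ∈ S | a j = B.piecewise a v j} :=
          card_le_card fun j hj => by simp [hBS hj, hj]
    · calc s ≤ #{j ∈ S \ B | w j = v j} := hvW w hw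
        _ ≤ #{j ∈ S | w j = B.piecewise a v j} :=
          card_le_card fun j hj => by
            simp only [mem_filter, mem_sdiff] at hj
            simp [hj]

theorem card_le_of_forall_card_ball_le [Fintype ι] [DecidableEq ι] [Fintype α]
    (C : Finset (ι → α)) {L t : ℕ}
    (hLD : ∀ v : ι → α, #{c ∈ C | hammingDist c v ≤ t} ≤ L) {m : ℕ}
    (hm : m ≤ Fintype.card ι) (hmt : (L + 1) * (m - t) ≤ m) :
    #C ≤ L * Fintype.card α ^ (Fintype.card ι - m) := by
  by_contra! hC
  obtain ⟨S, -, hS⟩ := exists_subset_card_eq (s := (univ : Finset ι)) (by simpa using hm)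
  obtain ⟨y, -, hy⟩ := exists_lt_card_fiber_of_mul_lt_card_of_maps_to (f := Sᶜ.restrict)
    (t := (univ : Finset (↥Sᶜ → α))) (fun _ _ => mem_univ _)
    (by simpa [card_compl, hS, mul_comm] using hC)
  obtain ⟨W, hWC, hW⟩ := exists_subset_card_eq (Nat.succ_le_of_lt hy)
  obtain ⟨u, hu⟩ : W.Nonempty := by rw [← card_pos]; omega
  obtain ⟨v, hvu, hvW⟩ := exists_eq_off_forall_le_card_agree u W S (m - t) (by rwa [hW, hS])
  have hoff (w) (hw : w ∈ W) (j) (hj : j ∉ S) : w j = v j := by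
    have hrestrict (c) (hc : c ∈ W) : c j = y ⟨j, mem_compl.2 hj⟩ :=
      congrFun (mem_filter.1 (hWC hc)).2 ⟨j, mem_compl.2 hj⟩
    rw [hvu j hj, hrestrict w hw, hrestrict u hu]
  have hWball : W ⊆ {c ∈ C | hammingDist c v ≤ t} := fun w hw => by
    refine mem_filter.2 ⟨(mem_filter.1 (hWC hw)).1, ?_⟩
    have := hammingDist_add_card_agree_eq_of_eq_off (hoff w hw)
    have := hvW w hw
    omega
  have := card_le_card hWball
  have := hLD v
  omega

end Hamming

theorem succ_mul_tsub_le_of_mul_le {L m t : ℕ} (h : m * L ≤ (L + 1) * t) :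
    (L + 1) * (m - t) ≤ m := by
  rcases le_or_gt m t with hmt | hmt
  · simp [Nat.sub_eq_zero_of_le hmt]
  · rw [Nat.mul_sub, add_one_mul, mul_comm L m]
    omega

theorem stmt_0_general (q L n rn : ℕ) (r : ℝ)
    (hr1 : r ≤ (L : ℝ) / (L + 1))
    (hrn : (rn : ℝ) = r * n)
    (C : Finset (Fin n → Fin q))
    (hLD : ∀ v : Fin n → Fin q,
      (C.filter (fun c => hammingDist c v ≤ rn)).card ≤ L) :
    C.card ≤ L * q ^ (n - ((L + 1) * rn) / L) := by
  have hrn_le : (L + 1) * rn ≤ L * n := by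
    have hr : r * (L + 1) ≤ L := (le_div_iff₀ (by positivity)).1 hr1
    have : ((L + 1) * rn : ℝ) ≤ L * n := by
      rw [hrn, ← mul_assoc, mul_comm _ r]
      exact mul_le_mul_of_nonneg_right hr n.cast_nonneg
    exact_mod_cast this
  simpa using card_le_of_forall_card_ball_le C hLD
    (by simpa using Nat.div_le_of_le_mul hrn_le)
    (succ_mul_tsub_le_of_mul_le (Nat.div_mul_le_self _ _))

/-- Singleton-type bound for list-decodable codes (Shangguan–Tamo):
for q ≥ 2, L ≥ 1, r ∈ [0, L/(L+1)] with rn ∈ ℕ, every (r,L) list-decodable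
code C ⊆ [q]^n has |C| ≤ L · q^(n - ⌊((L+1)/L)·rn⌋). -/
theorem stmt_0 (q L n rn : ℕ) (r : ℝ)
    (hq : 2 ≤ q) (hL : 1 ≤ L)
    (hr0 : 0 ≤ r) (hr1 : r ≤ (L : ℝ) / (L + 1))
    (hrn : (rn : ℝ) = r * n)
    (C : Finset (Fin n → Fin q))
    (hLD : ∀ v : Fin n → Fin q,
      (C.filter (fun c => hammingDist c v ≤ rn)).card ≤ L) :
    C.card ≤ L * q ^ (n - ((L + 1) * rn) / L) :=
  stmt_0_general q L n rn r hr1 hrn C hLD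
end

section
/- Let C ⊆ [q]^n be an (r,L) list-decodable code with r ∈ [0, L/(L+1)), rn ∈ ℕ, and n ≥ L²/r. Then |C| ≤ max{q + ⌊f(n)·q⌋, L} · q^(n - (⌊((L+1)/L)·rn⌋ + 1)), where b ∈ [0, L-1] satisfies b ≡ rn (mod L) and f(n) = (L-b-1)/(2(⌊((L+1)/L)·rn⌋+1) - (L-b-1)). -/
/-!
Write the radius `ρ = rn` as `L k + b` with `b < L`, put `t = L - 1 - b` and
`E = ⌊(L+1)ρ/L⌋ + 1 = ρ + k + 1`, and let `M` be the maximum in the bound. If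
`|C| > M q^(n-E)`, pigeonhole on the coordinates outside a fixed set of `E` coordinates yields
`M + 1` codewords agreeing there, so it suffices to find, among any `M + 1` words of length `E`,
some `L + 1` in a common ball of radius `ρ`.

Counting agreements coordinate by coordinate (`c² ≥ 3c - 2` for each symbol count `c`), the size
`M + 1 > 2Eq/(2E - t)` forces a word `u` whose agreements with the other words sum to more than
`t`. Choose `L` further words `w` whose agreements with `u`, capped at `k + 1`, still sum to more
than `t` (here `L ≤ k` because `n ≥ L²/r`). The center `v` copies `u`, except on pairwise disjoint
blocks away from the chosen agreement positions, where it copies `w` to raise the agreement of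
`w` to `k + 1`. The blocks take at most `L(k+1) - (t+1) = ρ` positions from `u`, so each of the
`L + 1` words agrees with `v` in at least `k + 1` of the `ρ + k + 1` positions.
-/

open Finset

theorem Finset.three_mul_card_le_sum_card_fiber {α γ : Type*} [Fintype γ] [DecidableEq γ]
    (A : Finset α) (f : α → γ) :
    3 * #A ≤ ∑ x ∈ A, #{y ∈ A | f y = f x} + 2 * Fintype.card γ := by
  have hsq : ∑ x ∈ A, #{y ∈ A | f y = f x} =
      ∑ v, #{y ∈ A | f y = v} * #{y ∈ A | f y = v} := by
    rw [← sum_fiberwise' A f (fun v => #{y ∈ A | f y = v})]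
    simp only [sum_const, smul_eq_mul]
  rw [hsq, card_eq_sum_card_fiberwise (fun x _ => mem_univ (f x)), mul_sum, ← card_univ,
    mul_comm 2, card_eq_sum_ones, sum_mul, ← sum_add_distrib]
  refine sum_le_sum fun v _ => ?_
  set c := #{y ∈ A | f y = v}
  rcases Nat.lt_or_ge c 2 with hc | hc
  · interval_cases c <;> simp
  · nlinarith

theorem Finset.min_sum_le_sum_min {α : Type*} (s : Finset α) (f : α → ℕ) (c : ℕ) :
    min (∑ a ∈ s, f a) c ≤ ∑ a ∈ s, min (f a) c := by
  by_cases hbig : ∃ a ∈ s, c ≤ f a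
  · obtain ⟨a, ha, hca⟩ := hbig
    calc min (∑ a ∈ s, f a) c ≤ min (f a) c := (min_le_right _ _).trans (le_min hca le_rfl)
      _ ≤ ∑ a ∈ s, min (f a) c :=
          single_le_sum (f := fun a => min (f a) c) (fun _ _ => Nat.zero_le _) ha
  · push Not at hbig
    rw [sum_congr rfl fun a ha => min_eq_left (hbig a ha).le]
    exact min_le_left _ _

theorem Finset.exists_subset_card_eq_min_sum_le {α : Type*} {s : Finset α} (g : α → ℕ) {L : ℕ}
    (hL : L ≤ #s) : ∃ P ⊆ s, #P = L ∧ min (∑ a ∈ s, g a) L ≤ ∑ a ∈ P, g a := by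
  classical
  set S := {a ∈ s | g a ≠ 0}
  by_cases hS : #S ≤ L
  · obtain ⟨P, hSP, hPs, hPcard⟩ := exists_subsuperset_card_eq (filter_subset _ s) hS hL
    refine ⟨P, hPs, hPcard, (min_le_left _ _).trans ?_⟩
    rw [← sum_filter_ne_zero]
    exact sum_le_sum_of_subset hSP
  · obtain ⟨P, hPS, hPcard⟩ := exists_subset_card_eq (le_of_not_ge hS)
    refine ⟨P, hPS.trans (filter_subset _ s), hPcard, (min_le_right _ _).trans ?_⟩
    calc L = ∑ _a ∈ P, 1 := by rw [sum_const, smul_eq_mul, hPcard, mul_one]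
      _ ≤ ∑ a ∈ P, g a :=
          sum_le_sum fun a ha => Nat.one_le_iff_ne_zero.2 (mem_filter.1 (hPS ha)).2

theorem Finset.exists_pairwiseDisjoint_subset_card_eq {κ α : Type*} [DecidableEq κ]
    [DecidableEq α] (P : Finset κ) (d : κ → ℕ) {F : Finset α} (h : ∑ i ∈ P, d i ≤ #F) :
    ∃ D : κ → Finset α, (∀ i ∈ P, D i ⊆ F ∧ #(D i) = d i) ∧ (P : Set κ).PairwiseDisjoint D := by
  induction P using Finset.induction_on generalizing F with
  | empty => exact ⟨fun _ => ∅, by simp, by simp⟩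
  | @insert a P ha ih =>
    rw [sum_insert ha] at h
    obtain ⟨Da, hDaF, hDacard⟩ := exists_subset_card_eq (le_of_add_le_left h)
    obtain ⟨D, hD, hDdisj⟩ := ih (F := F \ Da) (by rw [card_sdiff_of_subset hDaF]; omega)
    have hDa : ∀ i ∈ P, Disjoint Da (D i) := fun i hi => disjoint_sdiff.mono_right (hD i hi).1
    refine ⟨Function.update D a Da, fun i hi => ?_, ?_⟩
    · rcases mem_insert.1 hi with rfl | hiP
      · simp [hDaF, hDacard]
      · rw [Function.update_of_ne (ne_of_mem_of_not_mem hiP ha)]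
        exact ⟨(hD i hiP).1.trans sdiff_subset, (hD i hiP).2⟩
    · rw [coe_insert]
      refine .insert_of_notMem (hDdisj.mono_on fun i hi => ?_) (mod_cast ha) fun i hi => ?_
      · rw [Function.update_of_ne (ne_of_mem_of_not_mem hi ha)]
      · rw [Function.update_self, Function.update_of_ne (ne_of_mem_of_not_mem hi ha)]
        exact hDa i hi

theorem two_mul_mul_add_mul_lt_of_floor_lt {E t q a : ℕ} (ht : t < 2 * E)
    (ha : q + ⌊(t : ℝ) / (2 * E - t) * q⌋₊ < a) : 2 * E * q + t * a < 2 * E * a := by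
  have hpos : (0 : ℝ) < 2 * E - t := by
    rw [sub_pos]; exact_mod_cast ht
  have hlt : (q : ℝ) + t / (2 * E - t) * q < a := by
    have := Nat.lt_floor_add_one ((t : ℝ) / (2 * E - t) * q)
    have : ((q + ⌊(t : ℝ) / (2 * E - t) * q⌋₊ + 1 : ℕ) : ℝ) ≤ a := by exact_mod_cast ha
    push_cast at this
    linarith
  have : (2 * E * q : ℝ) < (2 * E - t) * a := by
    rw [div_mul_eq_mul_div, ← lt_sub_iff_add_lt', div_lt_iff₀ hpos] at hlt
    nlinarith
  have : ((2 * E * q + t * a : ℕ) : ℝ) < ((2 * E * a : ℕ) : ℝ) := by push_cast; linarith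
  exact_mod_cast this

theorem pow_le_mul_pow_sub_one {q M : ℕ} (n : ℕ) (hq : q ≤ M) (hM : 1 ≤ M) :
    q ^ n ≤ M * q ^ (n - 1) := by
  rcases n with _ | n
  · simpa using hM
  · rw [pow_succ, Nat.add_sub_cancel, mul_comm]
    exact Nat.mul_le_mul_right _ hq

theorem mul_self_le_of_sq_div_le {L ρ n : ℕ} {r : ℝ} (hn0 : 0 < n) (hρn : (ρ : ℝ) = r * n)
    (hn : (L : ℝ) ^ 2 / r ≤ n) (hρ : ρ ≠ 0) : L * L ≤ ρ := by
  have hr : 0 < r := (mul_pos_iff_of_pos_right (Nat.cast_pos.2 hn0)).1 (hρn ▸ by positivity)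
  have := (div_le_iff₀ hr).1 hn
  exact_mod_cast (show ((L * L : ℕ) : ℝ) ≤ ρ by push_cast; nlinarith)

theorem add_div_add_one_le_of_lt_div {L ρ n : ℕ} {r : ℝ} (hn0 : 0 < n)
    (hρn : (ρ : ℝ) = r * n) (hr : r < L / (L + 1)) : ρ + ρ / L + 1 ≤ n := by
  have hlt : ρ * (L + 1) < L * n := by
    have : (ρ : ℝ) * (L + 1) < L * n := by
      rw [lt_div_iff₀ (by positivity)] at hr
      rw [hρn]
      nlinarith [(Nat.cast_pos (α := ℝ)).2 hn0]
    exact_mod_cast this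
  nlinarith [Nat.mul_div_le ρ L]

section Agreement

variable {ι β : Type*} [Fintype ι] [DecidableEq β]

def agreeSet (x y : ι → β) : Finset ι := {i | x i = y i}

theorem card_agreeSet_add_hammingDist (x y : ι → β) :
    #(agreeSet x y) + hammingDist x y = Fintype.card ι := by
  rw [agreeSet, hammingDist, card_filter_add_card_filter_not, card_univ]

theorem card_agreeSet_self (x : ι → β) : #(agreeSet x x) = Fintype.card ι := by
  simp [agreeSet]

theorem sum_card_agreeSet (A : Finset (ι → β)) (x : ι → β) :
    ∑ y ∈ A, #(agreeSet x y) = ∑ i, #{y ∈ A | y i = x i} := by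
  simp only [agreeSet, card_filter]
  rw [sum_comm]
  simp only [eq_comm]

theorem exists_lt_sum_card_agreeSet [Fintype β] {A : Finset (ι → β)} {t : ℕ}
    (h : 2 * Fintype.card ι * Fintype.card β + t * #A < 2 * Fintype.card ι * #A) :
    ∃ u ∈ A, t < ∑ y ∈ A.erase u, #(agreeSet u y) := by
  by_contra! hle
  have hlower : 3 * Fintype.card ι * #A ≤
      ∑ x ∈ A, ∑ y ∈ A, #(agreeSet x y) + 2 * Fintype.card ι * Fintype.card β := by
    calc 3 * Fintype.card ι * #A = ∑ _i : ι, 3 * #A := by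
          rw [sum_const, card_univ, smul_eq_mul]; ring
      _ ≤ ∑ i, (∑ x ∈ A, #{y ∈ A | y i = x i} + 2 * Fintype.card β) :=
          sum_le_sum fun i _ => three_mul_card_le_sum_card_fiber A (· i)
      _ = _ := by
          simp only [sum_card_agreeSet]
          rw [sum_add_distrib, sum_const, card_univ, smul_eq_mul, sum_comm]; ring
  have hupper : ∑ x ∈ A, ∑ y ∈ A, #(agreeSet x y) ≤ ∑ _x ∈ A, (Fintype.card ι + t) :=
    sum_le_sum fun x hx => by
      rw [← add_sum_erase A _ hx, card_agreeSet_self]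
      exact Nat.add_le_add_left (hle x hx) _
  rw [sum_const, smul_eq_mul] at hupper
  nlinarith

theorem hammingDist_restrict_eq {S : Finset ι} {x y : ι → β} (h : ∀ i ∉ S, x i = y i) :
    hammingDist (S.restrict x) (S.restrict y) = hammingDist x y := by
  rw [hammingDist, hammingDist, ← card_map (Function.Embedding.subtype _)]
  congr 1
  ext i
  simp only [mem_map, mem_filter, mem_univ, true_and, Function.Embedding.coe_subtype]
  exact ⟨fun ⟨j, hj, hji⟩ => hji ▸ hj, fun hi => ⟨⟨i, not_imp_comm.1 (h i) hi⟩, hi, rfl⟩⟩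

end Agreement

section Patch

variable {ι β : Type*} [DecidableEq ι]

noncomputable def patch (u : ι → β) (P : Finset (ι → β)) (D : (ι → β) → Finset ι) : ι → β :=
  fun j => if h : ∃ w ∈ P, j ∈ D w then h.choose j else u j

theorem patch_apply_of_mem {u : ι → β} {P : Finset (ι → β)} {D : (ι → β) → Finset ι}
    (hD : (P : Set (ι → β)).PairwiseDisjoint D) {w : ι → β} (hw : w ∈ P) {j : ι}
    (hj : j ∈ D w) : patch u P D j = w j := by
  have h : ∃ w ∈ P, j ∈ D w := ⟨w, hw, hj⟩
  obtain ⟨hmem, hjmem⟩ := h.choose_spec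
  rw [patch, dif_pos h, hD.elim hmem hw (not_disjoint_iff.2 ⟨j, hjmem, hj⟩)]

theorem patch_apply_of_forall_notMem {u : ι → β} {P : Finset (ι → β)}
    {D : (ι → β) → Finset ι} {j : ι} (hj : ∀ w ∈ P, j ∉ D w) : patch u P D j = u j := by
  rw [patch, dif_neg (by simpa using hj)]

end Patch

section ListDecoding

variable {ι β : Type*} [Fintype ι] [DecidableEq ι] [DecidableEq β]

theorem exists_le_card_agreeSet (u : ι → β) (P : Finset (ι → β)) (c : ℕ)
    (hc : #P * c ≤ Fintype.card ι) :
    ∃ v : ι → β, (∀ w ∈ P, c ≤ #(agreeSet w v)) ∧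
      Fintype.card ι + ∑ w ∈ P, min #(agreeSet u w) c ≤ #(agreeSet u v) + #P * c := by
  choose W hWu hWcard using fun w : ι → β =>
    exists_subset_card_eq (min_le_left #(agreeSet u w) c)
  set U := P.biUnion W
  have hsplit : ∑ w ∈ P, (c - #(W w)) + ∑ w ∈ P, #(W w) = #P * c := by
    rw [← sum_add_distrib, sum_congr rfl fun w _ => Nat.sub_add_cancel (by simp [hWcard])]
    simp
  have hU : #U ≤ ∑ w ∈ P, #(W w) := card_biUnion_le
  obtain ⟨D, hD, hDdisj⟩ := exists_pairwiseDisjoint_subset_card_eq P (fun w => c - #(W w))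
    (F := Uᶜ) (by rw [card_compl]; omega)
  have hWD : ∀ w ∈ P, ∀ w' ∈ P, Disjoint (W w) (D w') := fun w hw w' hw' =>
    disjoint_left.2 fun j hjW hjD =>
      mem_compl.1 ((hD w' hw').1 hjD) (mem_biUnion.2 ⟨w, hw, hjW⟩)
  refine ⟨patch u P D, fun w hw => ?_, ?_⟩
  · have hsub : D w ∪ W w ⊆ agreeSet w (patch u P D) := by
      intro j hj
      simp only [agreeSet, mem_filter, mem_univ, true_and]
      rcases mem_union.1 hj with hjD | hjW
      · exact (patch_apply_of_mem hDdisj hw hjD).symm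
      · rw [patch_apply_of_forall_notMem fun w' hw' hjD =>
          disjoint_left.1 (hWD w hw w' hw') hjW hjD]
        simpa [agreeSet, eq_comm] using hWu w hjW
    calc c = #(D w ∪ W w) := by
          rw [card_union_of_disjoint (hWD w hw w hw).symm, (hD w hw).2, hWcard]
          exact (Nat.sub_add_cancel (min_le_right _ _)).symm
      _ ≤ _ := card_le_card hsub
  · have hsub : (P.biUnion D)ᶜ ⊆ agreeSet u (patch u P D) := by
      intro j hj
      simp only [agreeSet, mem_filter, mem_univ, true_and]
      rw [patch_apply_of_forall_notMem fun w hw hjD =>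
        mem_compl.1 hj (mem_biUnion.2 ⟨w, hw, hjD⟩)]
    have hDcard : #(P.biUnion D) ≤ ∑ w ∈ P, (c - #(W w)) :=
      card_biUnion_le.trans (sum_le_sum fun w hw => (hD w hw).2.le)
    have hagree := card_le_card hsub
    rw [card_compl] at hagree
    simp only [← hWcard]
    have := card_le_univ (P.biUnion D)
    omega

theorem exists_lt_card_filter_hammingDist_le [Fintype β] {L ρ : ℕ} (hL : 0 < L)
    (hLρ : L * L ≤ ρ) (hι : Fintype.card ι = ρ + ρ / L + 1) {A : Finset (ι → β)} (hA : L < #A)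
    (h : 2 * Fintype.card ι * Fintype.card β + (L - 1 - ρ % L) * #A <
      2 * Fintype.card ι * #A) :
    ∃ v : ι → β, L < #{x ∈ A | hammingDist x v ≤ ρ} := by
  set k := ρ / L
  have hρ : L * k + ρ % L = ρ := Nat.div_add_mod ρ L
  have hb : ρ % L < L := Nat.mod_lt ρ hL
  have hLk : L ≤ k := (Nat.le_div_iff_mul_le hL).2 hLρ
  obtain ⟨u, hu, hsum⟩ := exists_lt_sum_card_agreeSet h
  obtain ⟨P, hPA, hPcard, hPsum⟩ := exists_subset_card_eq_min_sum_le
    (s := A.erase u) (L := L) (fun w => min #(agreeSet u w) (k + 1))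
    (by rw [card_erase_of_mem hu]; omega)
  have hmin := min_sum_le_sum_min (A.erase u) (fun w => #(agreeSet u w)) (k + 1)
  have hLk1 : L * (k + 1) ≤ Fintype.card ι := by rw [mul_add, mul_one]; omega
  obtain ⟨v, hvP, hvu⟩ := exists_le_card_agreeSet u P (k + 1) (hPcard ▸ hLk1)
  have hdist : ∀ x, k + 1 ≤ #(agreeSet x v) → hammingDist x v ≤ ρ := fun x hx => by
    have := card_agreeSet_add_hammingDist x v
    omega
  have hball : insert u P ⊆ {x ∈ A | hammingDist x v ≤ ρ} := by
    refine insert_subset (mem_filter.2 ⟨hu, hdist u ?_⟩) fun w hw =>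
      mem_filter.2 ⟨mem_of_mem_erase (hPA hw), hdist w (hvP w hw)⟩
    rw [hPcard, mul_add, mul_one] at hvu
    omega
  refine ⟨v, ?_⟩
  calc L < #(insert u P) := by
        rw [card_insert_of_notMem fun h => (mem_erase.1 (hPA h)).1 rfl, hPcard]
        exact Nat.lt_succ_self L
    _ ≤ _ := card_le_card hball

theorem exists_subset_card_eq_forall_notMem_eq [Fintype β] (C : Finset (ι → β))
    (S : Finset ι) {M : ℕ} (h : M * Fintype.card β ^ #Sᶜ < #C) :
    ∃ A ⊆ C, #A = M + 1 ∧ ∀ x ∈ A, ∀ y ∈ A, ∀ i ∉ S, x i = y i := by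
  obtain ⟨y, -, hy⟩ := exists_lt_card_fiber_of_mul_lt_card_of_maps_to
    (f := Sᶜ.restrict (π := fun _ => β)) (t := univ) (fun x _ => mem_univ _)
    (by simpa [mul_comm, card_compl] using h)
  obtain ⟨A, hA, hAcard⟩ := exists_subset_card_eq hy
  refine ⟨A, hA.trans (filter_subset _ C), hAcard, fun x hx x' hx' i hi => ?_⟩
  have hxy : ∀ z ∈ A, z i = y ⟨i, mem_compl.2 hi⟩ := fun z hz =>
    congrFun (mem_filter.1 (hA hz)).2 ⟨i, mem_compl.2 hi⟩
  rw [hxy x hx, hxy x' hx']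

theorem card_le_mul_pow_of_forall_card_filter_hammingDist_le [Fintype β] {L ρ M : ℕ}
    (hL : 0 < L) (hLρ : L * L ≤ ρ) (hι : ρ + ρ / L + 1 ≤ Fintype.card ι) (hLM : L ≤ M)
    (hM : 2 * (ρ + ρ / L + 1) * Fintype.card β + (L - 1 - ρ % L) * (M + 1) <
      2 * (ρ + ρ / L + 1) * (M + 1))
    {C : Finset (ι → β)} (hC : ∀ v : ι → β, #{c ∈ C | hammingDist c v ≤ ρ} ≤ L) :
    #C ≤ M * Fintype.card β ^ (Fintype.card ι - (ρ + ρ / L + 1)) := by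
  by_contra! hlt
  obtain ⟨S, -, hS⟩ := exists_subset_card_eq (s := (univ : Finset ι)) (n := ρ + ρ / L + 1)
    (by rwa [card_univ])
  obtain ⟨A, hAC, hAcard, hAeq⟩ := exists_subset_card_eq_forall_notMem_eq C S
    (M := M) (by rwa [card_compl, hS])
  obtain ⟨c₀, hc₀⟩ : A.Nonempty := card_pos.1 (by omega)
  have hinj : Set.InjOn (S.restrict : (ι → β) → S → β) A := fun x hx y hy hxy => funext fun i => by
    by_cases hi : i ∈ S
    · exact congrFun hxy ⟨i, hi⟩
    · exact hAeq x hx y hy i hi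
  obtain ⟨v', hv'⟩ := exists_lt_card_filter_hammingDist_le (ι := S) hL hLρ
    (by simpa using hS) (A := A.image S.restrict) (by rw [card_image_of_injOn hinj]; omega)
    (by rwa [card_image_of_injOn hinj, Fintype.card_coe, hS, hAcard])
  set v : ι → β := fun i => if h : i ∈ S then v' ⟨i, h⟩ else c₀ i
  have hdist : ∀ x ∈ A, hammingDist (S.restrict x) v' = hammingDist x v := fun x hx => by
    have hv : S.restrict v = v' := funext fun i => dif_pos i.2
    rw [← hv]
    exact hammingDist_restrict_eq fun i hi => by
      simp only [v, dif_neg hi]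
      exact hAeq x hx c₀ hc₀ i hi
  have hball : #{x ∈ A.image S.restrict | hammingDist x v' ≤ ρ} ≤
      #{c ∈ C | hammingDist c v ≤ ρ} := by
    rw [filter_image]
    refine card_image_le.trans (card_le_card fun x hx => ?_)
    rw [mem_filter] at hx ⊢
    exact ⟨hAC hx.1, hdist x hx.1 ▸ hx.2⟩
  have := hC v
  omega

theorem card_le_max_mul_pow_of_forall_card_filter_hammingDist_le [Fintype β] {L ρ : ℕ}
    (hL : 0 < L) (hLρ : L * L ≤ ρ) (hι : ρ + ρ / L + 1 ≤ Fintype.card ι)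
    {C : Finset (ι → β)} (hC : ∀ v : ι → β, #{c ∈ C | hammingDist c v ≤ ρ} ≤ L) :
    #C ≤ max (Fintype.card β + ⌊((L - 1 - ρ % L : ℕ) : ℝ) /
        (2 * ((ρ + ρ / L + 1 : ℕ) : ℝ) - ((L - 1 - ρ % L : ℕ) : ℝ)) * Fintype.card β⌋₊) L *
      Fintype.card β ^ (Fintype.card ι - (ρ + ρ / L + 1)) := by
  have ht : L - 1 - ρ % L < 2 * (ρ + ρ / L + 1) :=
    (Nat.sub_le _ _).trans (Nat.sub_le _ _) |>.trans_lt
      (by linarith [(Nat.le_mul_self L).trans hLρ, Nat.zero_le (ρ / L)])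
  exact card_le_mul_pow_of_forall_card_filter_hammingDist_le hL hLρ hι (le_max_right _ _)
    (two_mul_mul_add_mul_lt_of_floor_lt ht (Nat.lt_succ_of_le (le_max_left _ _))) hC

end ListDecoding

theorem stmt_1_general (q L n rn b : ℕ) (r : ℝ)
    (hL : 1 ≤ L)
    (hr1 : r < (L : ℝ) / (L + 1))
    (hrn : (rn : ℝ) = r * n)
    (hn : (L : ℝ) ^ 2 / r ≤ n)
    (hbrn : rn % L = b)
    (C : Finset (Fin n → Fin q))
    (hLD : ∀ v : Fin n → Fin q,
      (C.filter (fun c => hammingDist c v ≤ rn)).card ≤ L) :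
    (C.card : ℝ) ≤
      (max (q + ⌊(((L : ℝ) - b - 1) /
            (2 * ((((L + 1) * rn) / L : ℕ) + 1) - ((L : ℝ) - b - 1))) * q⌋₊) L) *
        (q : ℝ) ^ (n - (((L + 1) * rn) / L + 1)) := by
  subst hbrn
  have hE : (L + 1) * rn / L = rn + rn / L := by rw [add_mul, one_mul, Nat.mul_add_div hL]
  have ht : (L : ℝ) - (rn % L : ℕ) - 1 = (L - 1 - rn % L : ℕ) := by
    have := Nat.mod_lt rn hL
    rw [Nat.cast_sub (by omega), Nat.cast_sub hL]; ring
  rw [hE, ht, ← Nat.cast_succ]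
  obtain rfl | hrn0 := eq_or_ne rn 0
  · rw [Nat.zero_div, add_zero, zero_add]
    calc (#C : ℝ) ≤ (q ^ n : ℕ) := by exact_mod_cast (card_le_univ C).trans_eq (by simp)
      _ ≤ _ := by
        exact_mod_cast pow_le_mul_pow_sub_one n ((Nat.le_add_right q _).trans (le_max_left _ _))
          (hL.trans (le_max_right _ _))
  have hn0 : 0 < n := Nat.pos_of_ne_zero fun h => hrn0 (by simpa [h] using hrn)
  have := card_le_max_mul_pow_of_forall_card_filter_hammingDist_le hL
    (mul_self_le_of_sq_div_le hn0 hrn hn hrn0)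
    (by simpa using add_div_add_one_le_of_lt_div hn0 hrn hr1) hLD
  simp only [Fintype.card_fin] at this
  exact_mod_cast this

/-- Improved Singleton-type bound: for an (r,L) list-decodable code with
r ∈ [0, L/(L+1)), rn ∈ ℕ, n ≥ L²/r,
|C| ≤ max{q + ⌊f(n)·q⌋, L} · q^(n - (⌊((L+1)/L)·rn⌋ + 1)), where
b ≡ rn (mod L), 0 ≤ b ≤ L-1, and
f(n) = (L-b-1)/(2(⌊((L+1)/L)·rn⌋+1) - (L-b-1)). -/
theorem stmt_1 (q L n rn b : ℕ) (r : ℝ)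
    (hL : 1 ≤ L)
    (hr0 : 0 ≤ r) (hr1 : r < (L : ℝ) / (L + 1))
    (hrn : (rn : ℝ) = r * n)
    (hn : (L : ℝ) ^ 2 / r ≤ n)
    (hb : b < L) (hbrn : rn % L = b)
    (C : Finset (Fin n → Fin q))
    (hLD : ∀ v : Fin n → Fin q,
      (C.filter (fun c => hammingDist c v ≤ rn)).card ≤ L) :
    (C.card : ℝ) ≤
      (max (q + ⌊(((L : ℝ) - b - 1) /
            (2 * ((((L + 1) * rn) / L : ℕ) + 1) - ((L : ℝ) - b - 1))) * q⌋₊) L) *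
        (q : ℝ) ^ (n - (((L + 1) * rn) / L + 1)) :=
  stmt_1_general q L n rn b r hL hr1 hrn hn hbrn C hLD
end

section
/- For integers q ≥ 2, 1 ≤ L ≤ q, and r ∈ [0, L/(L+1)) with rn ∈ ℕ and rn ≡ L-1 (mod L), if n is sufficiently large with respect to r and L, then every (r,L) list-decodable code in [q]^n has size at most q^(n - ⌊((L+1)/L)·rn⌋). -/
/-!
Suppose `|C| > q^(n-m)` with `m = ⌊(L+1)rn/L⌋ = rn + s`, where `rn = Ls + (L-1)`. Fix a window
`S` of `m + 1` coordinates. By pigeonhole on the projection away from `S`, some `q + 1` codewords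
agree outside `S`, and by pigeonhole again two of them, `x` and `y`, agree at some `j₀ ∈ S`.
Add `L - 1` further codewords of that fiber. A word `v` is within distance `rn` of one of them as
soon as `v` agrees with it outside `S` and on `s + 1` coordinates of `S`. Giving `x` and `y`
disjoint blocks of size `s` in `S \ {j₀}` (they share `j₀`) and each of the others a block of
size `s + 1` uses exactly `(L+1)s + L - 1 = m` coordinates, so a common centre `v` exists and
the ball of radius `rn` around it holds `L + 1` codewords.
-/

open Finset

/-- The radius `ρ` is absolute: it is the paper's `rn`, not `r`. -/
def IsListDecodable {α β : Type*} [Fintype α] [DecidableEq β] (C : Finset (α → β)) (ρ L : ℕ) :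
    Prop :=
  ∀ v : α → β, (C.filter fun c => hammingDist c v ≤ ρ).card ≤ L

lemma hammingDist_le_card_of_eq_of_notMem {ι : Type*} [Fintype ι] {β : ι → Type*}
    [∀ i, DecidableEq (β i)] {x y : ∀ i, β i} (D : Finset ι) (h : ∀ i ∉ D, x i = y i) :
    hammingDist x y ≤ D.card :=
  card_le_card fun i hi => by
    by_contra hiD
    exact (mem_filter.1 hi).2 (h i hiD)

lemma exists_pairwiseDisjoint_subset_card_eq {ι α : Type*} (E : Finset ι) (size : ι → ℕ)
    (T : Finset α) (h : ∑ i ∈ E, size i ≤ T.card) :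
    ∃ B : ι → Finset α, (∀ i ∈ E, B i ⊆ T ∧ (B i).card = size i) ∧
      (E : Set ι).PairwiseDisjoint B := by
  classical
  induction E using Finset.induction_on generalizing T with
  | empty => exact ⟨fun _ => ∅, by simp, by simp⟩
  | insert a E ha ih =>
    rw [sum_insert ha] at h
    obtain ⟨Ba, hBaT, hBa⟩ := exists_subset_card_eq (le_of_add_le_left h)
    obtain ⟨B, hB, hBdisj⟩ := ih (T \ Ba) (by rw [card_sdiff_of_subset hBaT]; omega)
    have hupdate : ∀ i ∈ E, Function.update B a Ba i = B i := fun i hi =>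
      Function.update_of_ne (ne_of_mem_of_not_mem hi ha) _ _
    refine ⟨Function.update B a Ba, fun i hi => ?_, ?_⟩
    · rcases mem_insert.1 hi with rfl | hi
      · simpa using ⟨hBaT, hBa⟩
      · rw [hupdate i hi]
        exact ⟨(hB i hi).1.trans sdiff_subset, (hB i hi).2⟩
    · rw [coe_insert]
      refine (hBdisj.mono_on fun i hi => (hupdate i hi).le).insert_of_notMem ha fun j hj => ?_
      rw [hupdate j hj, Function.update_self]
      exact disjoint_of_subset_right (hB j hj).1 disjoint_sdiff

lemma exists_eq_on_pairwiseDisjoint {α β : Type*} (E : Set (α → β)) (B : (α → β) → Finset α)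
    (hB : E.PairwiseDisjoint B) (v₀ : α → β) :
    ∃ v : α → β, (∀ w ∈ E, ∀ i ∈ B w, v i = w i) ∧ ∀ i, (∀ w ∈ E, i ∉ B w) → v i = v₀ i := by
  classical
  refine ⟨fun i => if h : ∃ w ∈ E, i ∈ B w then h.choose i else v₀ i, fun w hw i hi => ?_,
    fun i hi => dif_neg fun ⟨w, hw, hiw⟩ => hi w hw hiw⟩
  have h : ∃ w ∈ E, i ∈ B w := ⟨w, hw, hi⟩
  obtain ⟨hwE, hiw⟩ := h.choose_spec
  simp only [dif_pos h]
  rw [hB.elim hwE hw (not_disjoint_iff.2 ⟨i, hiw, hi⟩)]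

lemma exists_subset_card_gt_forall_eq_of_notMem {α β : Type*} [Fintype α] [Fintype β]
    (C : Finset (α → β)) (S : Finset α) (k : ℕ)
    (h : Fintype.card β ^ (Fintype.card α - S.card) * k < C.card) :
    ∃ D ⊆ C, k < D.card ∧ ∀ w ∈ D, ∀ w' ∈ D, ∀ i ∉ S, w i = w' i := by
  classical
  let restrict : (α → β) → {i // i ∉ S} → β := fun w i => w i
  have hcard : (univ : Finset ({i // i ∉ S} → β)).card =
      Fintype.card β ^ (Fintype.card α - S.card) := by
    simp [Fintype.card_subtype_compl]
  obtain ⟨b, -, hb⟩ := exists_lt_card_fiber_of_mul_lt_card_of_maps_to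
    (f := restrict) (fun w _ => mem_univ (restrict w)) (hcard ▸ h)
  refine ⟨_, filter_subset _ _, hb, fun w hw w' hw' i hi => ?_⟩
  have hwb := congrFun (mem_filter.1 hw).2 ⟨i, hi⟩
  have hw'b := congrFun (mem_filter.1 hw').2 ⟨i, hi⟩
  exact hwb.trans hw'b.symm

lemma exists_forall_hammingDist_le_card_sub {α β : Type*} [Fintype α] [DecidableEq β]
    (E : Finset (α → β)) (S : Finset α) (t : ℕ) (hE : ∀ w ∈ E, ∀ w' ∈ E, ∀ i ∉ S, w i = w' i)
    {x y : α → β} (hx : x ∈ E) (hy : y ∈ E) (hxy : x ≠ y) {j₀ : α} (hj₀ : j₀ ∈ S)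
    (hxyj₀ : x j₀ = y j₀) (hcard : E.card * (t + 1) ≤ S.card + 1) :
    ∃ v : α → β, ∀ w ∈ E, hammingDist w v ≤ S.card - (t + 1) := by
  classical
  let T := S.erase j₀
  have hT : T.card + 1 = S.card := card_erase_add_one hj₀
  -- `x` and `y` also agree with `v` at `j₀`, so their blocks can be one coordinate shorter.
  let size : (α → β) → ℕ := fun w => if w = x ∨ w = y then t else t + 1
  have hsum : ∑ w ∈ E, size w ≤ T.card := by
    have hxy' : E.filter (fun w => w = x ∨ w = y) = {x, y} := by
      ext w
      simp only [mem_filter, mem_insert, mem_singleton]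
      constructor
      · exact And.right
      · rintro (rfl | rfl) <;> simp [hx, hy]
    have hsplit := card_filter_add_card_filter_not (s := E) (fun w => w = x ∨ w = y)
    rw [sum_ite, sum_const, sum_const, hxy', card_pair hxy, smul_eq_mul, smul_eq_mul]
    rw [hxy', card_pair hxy] at hsplit
    nlinarith
  obtain ⟨B, hBT, hBdisj⟩ := exists_pairwiseDisjoint_subset_card_eq E size T hsum
  obtain ⟨v, hvB, hvx⟩ := exists_eq_on_pairwiseDisjoint (E : Set (α → β)) B hBdisj x
  have hvx' : ∀ i, (i ∉ S ∨ i = j₀) → v i = x i := fun i hi => hvx i fun w hw hiw => by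
    have := mem_erase.1 ((hBT w hw).1 hiw)
    tauto
  refine ⟨v, fun w hw => ?_⟩
  have hagree : ∀ i, (i ∈ B w ∨ i ∉ S ∨ (i = j₀ ∧ (w = x ∨ w = y))) → w i = v i := by
    rintro i (hi | hi | ⟨rfl, hw'⟩)
    · exact (hvB w hw i hi).symm
    · exact (hE x hx w hw i hi).symm.trans (hvx' i (.inl hi)).symm
    · rw [hvx' i (.inr rfl)]
      rcases hw' with rfl | rfl
      exacts [rfl, hxyj₀.symm]
  have hBw : (B w).card = size w := (hBT w hw).2
  by_cases hw' : w = x ∨ w = y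
  · calc hammingDist w v ≤ (T \ B w).card :=
          hammingDist_le_card_of_eq_of_notMem _ fun i hi => hagree i (by simp [T] at hi; tauto)
      _ = S.card - (t + 1) := by
          rw [card_sdiff_of_subset (hBT w hw).1, hBw]
          simp only [size, if_pos hw']
          omega
  · calc hammingDist w v ≤ (S \ B w).card :=
          hammingDist_le_card_of_eq_of_notMem _ fun i hi => hagree i (by simp at hi; tauto)
      _ = S.card - (t + 1) := by
          rw [card_sdiff_of_subset ((hBT w hw).1.trans (erase_subset _ _)), hBw]
          simp only [size, if_neg hw']

theorem IsListDecodable.card_le_pow {α β : Type*} [Fintype α] [Fintype β] [DecidableEq β]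
    {C : Finset (α → β)} {ρ L t : ℕ} (hC : IsListDecodable C ρ L) (hL : 1 ≤ L)
    (hLβ : L ≤ Fintype.card β) (hfit : (L + 1) * (t + 1) ≤ ρ + t + 2)
    (hlt : ρ + t < Fintype.card α) :
    C.card ≤ Fintype.card β ^ (Fintype.card α - (ρ + t)) := by
  by_contra! hbig
  obtain ⟨S, -, hS⟩ := exists_subset_card_eq (s := (univ : Finset α)) (n := ρ + t + 1)
    (by rw [card_univ]; omega)
  obtain ⟨D, hDC, hD, hDS⟩ := exists_subset_card_gt_forall_eq_of_notMem C S (Fintype.card β)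
    (by rwa [← pow_succ, hS, show Fintype.card α - (ρ + t + 1) + 1 = Fintype.card α - (ρ + t) by
      omega])
  obtain ⟨j₀, hj₀⟩ : S.Nonempty := card_pos.1 (by omega)
  obtain ⟨x, hx, y, hy, hxy, hxyj₀⟩ := exists_ne_map_eq_of_card_lt_of_maps_to
    (t := univ) (by rwa [card_univ]) (f := fun w : α → β => w j₀) fun w _ => mem_univ (w j₀)
  obtain ⟨E, hxyE, hED, hE⟩ := exists_subsuperset_card_eq (s := {x, y}) (n := L + 1)
    (insert_subset hx (singleton_subset_iff.2 hy)) (by rw [card_pair hxy]; omega) (by omega)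
  obtain ⟨v, hv⟩ := exists_forall_hammingDist_le_card_sub E S t
    (fun w hw w' hw' => hDS w (hED hw) w' (hED hw')) (hxyE (by simp)) (hxyE (by simp)) hxy hj₀
    hxyj₀ (by rw [hE, hS]; linarith)
  have hball : E ⊆ C.filter fun c => hammingDist c v ≤ ρ := fun w hw =>
    mem_filter.2 ⟨hDC (hED hw), by simpa [hS] using hv w hw⟩
  have := card_le_card hball
  have := hC v
  omega

theorem stmt_2_general (q L : ℕ) (r : ℝ)
    (hL1 : 1 ≤ L) (hLq : L ≤ q)
    (hr1 : r < (L : ℝ) / (L + 1)) :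
    ∃ N : ℕ, ∀ n rn : ℕ, N ≤ n →
      (rn : ℝ) = r * n → rn % L = L - 1 →
      ∀ C : Finset (Fin n → Fin q),
        (∀ v : Fin n → Fin q,
          (C.filter (fun c => hammingDist c v ≤ rn)).card ≤ L) →
        C.card ≤ q ^ (n - ((L + 1) * rn) / L) := by
  refine ⟨1, fun n rn hn hrn hmod C hC => ?_⟩
  have hradius : (L + 1) * rn < n * L := by
    have hr : r * (L + 1) < L := (lt_div_iff₀ (by positivity)).1 hr1
    have hn : (0 : ℝ) < n := by exact_mod_cast hn
    have : ((L : ℝ) + 1) * rn < n * L := by rw [hrn]; nlinarith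
    exact_mod_cast this
  have hdiv : (L + 1) * rn / L = rn + rn / L := by
    rw [add_mul, one_mul, Nat.mul_add_div hL1]
  have hlt : rn + rn / L < n := by rwa [← hdiv, Nat.div_lt_iff_lt_mul hL1]
  have hfit : (L + 1) * (rn / L + 1) ≤ rn + rn / L + 2 := by
    have hsplit := Nat.div_add_mod rn L
    rw [hmod] at hsplit
    have : L * (rn / L) + L = rn + 1 := by omega
    linarith
  simpa [hdiv] using IsListDecodable.card_le_pow (C := C) hC hL1 (by simpa using hLq) hfit
    (by simpa using hlt)

/-- For q ≥ 2, 1 ≤ L ≤ q, r ∈ [0, L/(L+1)) with rn ∈ ℕ and rn ≡ L-1 (mod L),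
for all sufficiently large n (with respect to r, L), every (r,L) list-decodable
code in [q]^n has size at most q^(n - ⌊((L+1)/L)·rn⌋). -/
theorem stmt_2 (q L : ℕ) (r : ℝ)
    (hq : 2 ≤ q) (hL1 : 1 ≤ L) (hLq : L ≤ q)
    (hr0 : 0 ≤ r) (hr1 : r < (L : ℝ) / (L + 1)) :
    ∃ N : ℕ, ∀ n rn : ℕ, N ≤ n →
      (rn : ℝ) = r * n → rn % L = L - 1 →
      ∀ C : Finset (Fin n → Fin q),
        (∀ v : Fin n → Fin q,
          (C.filter (fun c => hammingDist c v ≤ rn)).card ≤ L) →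
        C.card ≤ q ^ (n - ((L + 1) * rn) / L) :=
  stmt_2_general q L r hL1 hLq hr1
end

section
/- For a prime power q, integers n and L ≥ 2, and r ∈ [0, L/(L+1)) with rn ∈ ℕ, if n - ⌈((L+1)/L)·rn⌉ + 1 > (L-1)·q/(q-1), then no linear code over 𝔽_q of length n and dimension n - ⌈((L+1)/L)·rn⌉ + 1 is (r,L) list-decodable. -/
/-!
Bring `C` into systematic form: an information set `S` with `#S = k` and codewords `g j`
(`j ∈ S`) restricting to the unit vectors on `S`. With `s = rn` and `t = ⌈s/L⌉ - 1` we have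
`#Sᶜ ≤ s + t` and `L t < s`, and a multiple `β • g j` lies within distance `s` of any centre
vanishing on `S` with which it agrees on `t + 1` coordinates of `Sᶜ`.

If fewer than `L` generators have weight `≥ s` on `Sᶜ`, the at least `k - L + 1` light ones and
all their nonzero multiples lie in the ball of radius `s` around `0`, and the hypothesis on `k`
says exactly that `(k - L + 1)(q - 1) ≥ L`. Otherwise pick `L` heavy generators. Each has at most
`t` zeros on `Sᶜ`, and `L t < s ≤ #Sᶜ`, so they share a nonzero coordinate `c₀`. The centre is `1`
at `c₀` and agrees with `(g j c₀)⁻¹ • g j` on a `j`-th block of `t` further coordinates, the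
blocks being disjoint; its weight `1 + L t` is at most `s`, so its ball contains `0` and these
`L` codewords.
-/

open Finset

lemma hammingDist_le_card_of_eqOn {ι : Type*} [Fintype ι] {β : ι → Type*}
    [∀ i, DecidableEq (β i)] {x y : ∀ i, β i} {D : Finset ι} (h : ∀ i ∉ D, x i = y i) :
    hammingDist x y ≤ #D :=
  card_le_card fun i hi => by_contra fun hiD => (mem_filter.1 hi).2 (h i hiD)

lemma exists_forall_ne_zero_of_card_mul_lt {α β M : Type*} [Zero M] [DecidableEq β]
    [DecidableEq M] (u : α → β → M) (H : Finset α) (Ω : Finset β) (z : ℕ)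
    (hz : ∀ j ∈ H, #{c ∈ Ω | u j c = 0} ≤ z) (h : #H * z < #Ω) :
    ∃ c ∈ Ω, ∀ j ∈ H, u j c ≠ 0 := by
  have hZ := card_biUnion_le_card_mul H (fun j => {c ∈ Ω | u j c = 0}) z hz
  obtain ⟨c, hcΩ, hc⟩ := exists_mem_notMem_of_card_lt_card (hZ.trans_lt h)
  exact ⟨c, hcΩ, fun j hj hjc => hc (mem_biUnion.2 ⟨j, hj, mem_filter.2 ⟨hcΩ, hjc⟩⟩)⟩

lemma exists_eqOn_of_card_mul_le {α β M : Type*} [Zero M] [DecidableEq α] [DecidableEq β]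
    (w : α → β → M) (t : ℕ) (H : Finset α) (Ω : Finset β) (hΩ : #H * t ≤ #Ω) :
    ∃ v : β → M, (∀ c ∉ Ω, v c = 0) ∧ ∀ i ∈ H, ∃ A ⊆ Ω, #A = t ∧ ∀ c ∈ A, w i c = v c := by
  induction H using Finset.induction_on generalizing Ω with
  | empty => exact ⟨0, fun _ _ => rfl, by simp⟩
  | insert i H hiH ih =>
    rw [card_insert_of_notMem hiH, add_one_mul] at hΩ
    obtain ⟨R, hRΩ, hR⟩ := exists_subset_card_eq (show t ≤ #Ω by omega)
    obtain ⟨v, hv0, hv⟩ := ih (Ω \ R) (by rw [card_sdiff_of_subset hRΩ]; omega)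
    refine ⟨fun c => if c ∈ R then w i c else v c, fun c hc => ?_, fun i' hi' => ?_⟩
    · simp only [if_neg fun h => hc (hRΩ h)]
      exact hv0 c fun h => hc (mem_sdiff.1 h).1
    rcases mem_insert.1 hi' with rfl | hi'H
    · exact ⟨R, hRΩ, hR, fun c hc => (if_pos hc).symm⟩
    · obtain ⟨A, hA, hAt, hAv⟩ := hv i' hi'H
      refine ⟨A, hA.trans sdiff_subset, hAt, fun c hc => ?_⟩
      simp only [if_neg (mem_sdiff.1 (hA hc)).2]
      exact hAv c hc

namespace Submodule

variable {F ι : Type*} [Field F]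

def restrictCoords (C : Submodule F (ι → F)) (S : Finset ι) : C →ₗ[F] (S → F) :=
  (LinearMap.funLeft F F ((↑) : S → ι)).comp C.subtype

@[simp]
lemma restrictCoords_apply (C : Submodule F (ι → F)) (S : Finset ι) (x : C) (j : S) :
    C.restrictCoords S x j = (x : ι → F) j := rfl

lemma surjective_restrictCoords_insert [DecidableEq ι] {C : Submodule F (ι → F)}
    {S : Finset ι} {x : ι → F} {j₀ : ι} (hS : Function.Surjective (C.restrictCoords S))
    (hx : x ∈ C) (hxS : ∀ j ∈ S, x j = 0) (hxj₀ : x j₀ ≠ 0) :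
    Function.Surjective (C.restrictCoords (insert j₀ S)) := by
  intro y
  obtain ⟨c, hc⟩ := hS fun j => y ⟨j, mem_insert_of_mem j.2⟩
  let a := (y ⟨j₀, mem_insert_self _ _⟩ - (c : ι → F) j₀) / x j₀
  refine ⟨c + a • ⟨x, hx⟩, funext fun ⟨j, hj⟩ => ?_⟩
  rcases mem_insert.1 hj with rfl | hjS
  · simp [a, hxj₀]
  · simpa [hxS j hjS] using congrFun hc ⟨j, hjS⟩

/-- A set `S` of maximal size on which restriction is onto is an information set: a codeword
vanishing on `S` but not at `j₀` would make restriction to `insert j₀ S` onto as well. -/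
lemma exists_bijective_restrictCoords [Fintype ι] (C : Submodule F (ι → F)) :
    ∃ S : Finset ι, Function.Bijective (C.restrictCoords S) := by
  classical
  obtain ⟨S, hS, hmax⟩ := exists_max_image
    (univ.filter fun S : Finset ι => Function.Surjective (C.restrictCoords S)) card
    ⟨∅, mem_filter.2 ⟨mem_univ _, fun y => ⟨0, funext fun j => absurd j.2 (notMem_empty _)⟩⟩⟩
  have hS := (mem_filter.1 hS).2
  refine ⟨S, (injective_iff_map_eq_zero _).2 fun x hx => ?_, hS⟩
  by_contra hx0
  obtain ⟨j₀, hj₀⟩ := Function.ne_iff.1 (Subtype.coe_ne_coe.2 hx0)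
  have hxS : ∀ j ∈ S, (x : ι → F) j = 0 := fun j hj => congrFun hx ⟨j, hj⟩
  have hj₀S : j₀ ∉ S := fun h => hj₀ (hxS j₀ h)
  have := hmax (insert j₀ S) (mem_filter.2 ⟨mem_univ _,
    surjective_restrictCoords_insert hS x.2 hxS hj₀⟩)
  rw [card_insert_of_notMem hj₀S] at this
  omega

def IsSystematic [DecidableEq ι] (C : Submodule F (ι → F)) (S : Finset ι) (g : ι → ι → F) :
    Prop :=
  ∀ j ∈ S, g j ∈ C ∧ ∀ j' ∈ S, g j j' = if j' = j then 1 else 0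

lemma exists_isSystematic [Fintype ι] [DecidableEq ι] (C : Submodule F (ι → F)) :
    ∃ S g, #S = Module.finrank F C ∧ C.IsSystematic S g := by
  obtain ⟨S, hS⟩ := C.exists_bijective_restrictCoords
  let e := LinearEquiv.ofBijective _ hS
  refine ⟨S, fun j => if h : j ∈ S then e.symm (Pi.single ⟨j, h⟩ 1) else 0, ?_, fun j hj => ?_⟩
  · rw [e.finrank_eq, Module.finrank_fintype_fun_eq_card, Fintype.card_coe]
  · refine ⟨by simp [hj], fun j' hj' => ?_⟩
    have := congrFun (e.apply_symm_apply (Pi.single ⟨j, hj⟩ 1)) ⟨j', hj'⟩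
    rw [LinearEquiv.ofBijective_apply, restrictCoords_apply, Pi.single_apply] at this
    simpa [hj, Subtype.ext_iff] using this

namespace IsSystematic

variable [Fintype ι] [DecidableEq ι] [DecidableEq F] {C : Submodule F (ι → F)} {S : Finset ι}
  {g : ι → ι → F}

lemma hammingDist_smul_add_card_le (hg : C.IsSystematic S g) {j : ι} (hj : j ∈ S) (β : F)
    {v : ι → F} (hv : ∀ c ∈ S, v c = 0) {A : Finset ι} (hA : A ⊆ Sᶜ)
    (hAv : ∀ c ∈ A, β * g j c = v c) :
    hammingDist (β • g j) v + #A ≤ #Sᶜ + 1 := by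
  have hD : hammingDist (β • g j) v ≤ #(insert j (Sᶜ \ A)) := by
    refine hammingDist_le_card_of_eqOn fun c hc => ?_
    simp only [mem_insert, mem_sdiff, mem_compl, not_or, not_and, not_not] at hc
    by_cases hcS : c ∈ S
    · simp [(hg j hj).2 c hcS, hc.1, hv c hcS]
    · exact hAv c (hc.2 hcS)
  have := card_insert_le j (Sᶜ \ A)
  rw [card_sdiff_of_subset hA] at this
  have := card_le_card hA
  omega

lemma card_lt_ncard [Fintype F] (hg : C.IsSystematic S g) {v : ι → F} {s : ℕ}
    (h0 : hammingDist 0 v ≤ s) (P : Finset (ι × F))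
    (hP : ∀ p ∈ P, p.1 ∈ S ∧ p.2 ≠ 0 ∧ hammingDist (p.2 • g p.1) v ≤ s) :
    #P < {c ∈ (C : Set (ι → F)) | hammingDist c v ≤ s}.ncard := by
  have hval : ∀ p ∈ P, ∀ j ∈ S, (p.2 • g p.1) j = if j = p.1 then p.2 else 0 := by
    intro p hp j hj
    simp [(hg _ (hP p hp).1).2 j hj]
  have hinj : Set.InjOn (fun p : ι × F => p.2 • g p.1) P := by
    intro p hp p' hp' h
    have h1 := congrFun h p.1
    simp only [hval p hp p.1 (hP p hp).1, hval p' hp' p.1 (hP p hp).1] at h1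
    by_cases h2 : p.1 = p'.1
    · simp only [h2] at h1
      exact Prod.ext h2 h1
    · simp only [h2, if_false] at h1
      exact absurd h1 (hP p hp).2.1
  have h0P : (0 : ι → F) ∉ P.image fun p => p.2 • g p.1 := by
    simp only [mem_image, not_exists, not_and]
    intro p hp hp0
    have := congrFun hp0 p.1
    simp only [hval p hp p.1 (hP p hp).1, Pi.zero_apply] at this
    exact (hP p hp).2.1 this
  calc #P < #(insert 0 (P.image fun p => p.2 • g p.1)) := by
        rw [card_insert_of_notMem h0P, card_image_of_injOn hinj]
        omega
    _ ≤ _ := by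
        rw [← Set.ncard_coe_finset]
        refine Set.ncard_le_ncard (fun x hx => ?_) (Set.toFinite _)
        simp only [coe_insert, coe_image, Set.mem_insert_iff, Set.mem_image, mem_coe] at hx
        rcases hx with rfl | ⟨p, hp, rfl⟩
        · exact ⟨C.zero_mem, h0⟩
        · exact ⟨C.smul_mem _ (hg _ (hP p hp).1).1, (hP p hp).2.2⟩

lemma card_mul_lt_ncard_of_light [Fintype F] (hg : C.IsSystematic S g) {J : Finset ι}
    (hJ : J ⊆ S) {s : ℕ} (hlight : ∀ j ∈ J, #{c ∈ Sᶜ | g j c ≠ 0} < s) :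
    #J * (Fintype.card F - 1) < {c ∈ (C : Set (ι → F)) | hammingDist c 0 ≤ s}.ncard := by
  have := hg.card_lt_ncard (v := 0) (s := s) (by simp) (J ×ˢ univ.erase 0) ?_
  · simpa [card_product, card_erase_of_mem] using this
  rintro ⟨j, β⟩ hp
  obtain ⟨hj, hβ⟩ := mem_product.1 hp
  refine ⟨hJ hj, ne_of_mem_erase hβ, ?_⟩
  have hd := hg.hammingDist_smul_add_card_le (hJ hj) β (fun _ _ => rfl)
    (A := {c ∈ Sᶜ | g j c = 0}) (filter_subset _ _) fun c hc => by simp [(mem_filter.1 hc).2]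
  have hsplit := card_filter_add_card_filter_not (s := Sᶜ) (fun c => g j c = 0)
  have hwt := hlight j hj
  simp only [ne_eq] at hwt hsplit
  exact le_of_add_le_add_right (hd.trans (by omega))

lemma exists_lt_ncard_of_heavy [Fintype F] (hg : C.IsSystematic S g) {H : Finset ι}
    (hH : H ⊆ S) (hHne : H.Nonempty) {s t : ℕ} (hheavy : ∀ j ∈ H, s ≤ #{c ∈ Sᶜ | g j c ≠ 0})
    (ht : #H * t < s) (hSc : #Sᶜ ≤ s + t) :
    ∃ v, #H < {c ∈ (C : Set (ι → F)) | hammingDist c v ≤ s}.ncard := by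
  have hs : s ≤ #Sᶜ := (hheavy _ hHne.choose_spec).trans (card_filter_le _ _)
  obtain ⟨c₀, hc₀, hHc₀⟩ := exists_forall_ne_zero_of_card_mul_lt g H Sᶜ t (fun j hj => by
    have hsplit := card_filter_add_card_filter_not (s := Sᶜ) (fun c => g j c = 0)
    have hwt := hheavy j hj
    simp only [ne_eq] at hwt hsplit
    omega) (by omega)
  obtain ⟨Ω, hΩ, hΩcard⟩ := exists_subset_card_eq
    (show #H * t ≤ #(Sᶜ.erase c₀) by rw [card_erase_of_mem hc₀]; omega)
  obtain ⟨v', hv'0, hv'⟩ := exists_eqOn_of_card_mul_le (fun j => (g j c₀)⁻¹ • g j) t H Ω hΩcard.ge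
  have hc₀Ω : c₀ ∉ Ω := fun h => notMem_erase c₀ _ (hΩ h)
  set v := Function.update v' c₀ 1
  have hvS : ∀ c ∈ S, v c = 0 := fun c hc => by
    have hcc₀ : c ≠ c₀ := fun h => mem_compl.1 hc₀ (h ▸ hc)
    have hcΩ : c ∉ Ω := fun h => mem_compl.1 (mem_of_mem_erase (hΩ h)) hc
    simp [v, hcc₀, hv'0 c hcΩ]
  have hv0 : hammingDist 0 v ≤ s := by
    refine (hammingDist_le_card_of_eqOn (D := insert c₀ Ω) fun c hc => ?_).trans
      ((card_insert_le _ _).trans (by omega))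
    simp only [mem_insert, not_or] at hc
    simp [v, hc.1, hv'0 c hc.2]
  refine ⟨v, (hg.card_lt_ncard hv0 (H.image fun j => (j, (g j c₀)⁻¹)) ?_).trans_le' ?_⟩
  · simp only [mem_image]
    rintro _ ⟨j, hj, rfl⟩
    refine ⟨hH hj, inv_ne_zero (hHc₀ j hj), show hammingDist ((g j c₀)⁻¹ • g j) v ≤ s from ?_⟩
    obtain ⟨A, hAΩ, hAt, hAv⟩ := hv' j hj
    have hAc₀ : c₀ ∉ A := fun h => hc₀Ω (hAΩ h)
    have := hg.hammingDist_smul_add_card_le (hH hj) (g j c₀)⁻¹ hvS (A := insert c₀ A)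
      (insert_subset hc₀ (hAΩ.trans (hΩ.trans (erase_subset _ _)))) fun c hc => by
        rcases mem_insert.1 hc with rfl | hcA
        · simp [v, hHc₀ j hj]
        · simpa [v, ne_of_mem_of_not_mem hcA hAc₀] using hAv c hcA
    rw [card_insert_of_notMem hAc₀] at this
    omega
  · exact (card_image_of_injective _ fun _ _ h => congrArg Prod.fst h).ge

lemma exists_lt_ncard [Fintype F] (hg : C.IsSystematic S g) {L s t : ℕ} (hL : 1 ≤ L)
    (hq : L ≤ (#S - (L - 1)) * (Fintype.card F - 1)) (ht : L * t < s) (hSc : #Sᶜ ≤ s + t) :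
    ∃ v, L < {c ∈ (C : Set (ι → F)) | hammingDist c v ≤ s}.ncard := by
  by_cases hH : L ≤ #{j ∈ S | s ≤ #{c ∈ Sᶜ | g j c ≠ 0}}
  · obtain ⟨H, hHS, rfl⟩ := exists_subset_card_eq hH
    exact hg.exists_lt_ncard_of_heavy (hHS.trans (filter_subset _ _)) (card_pos.1 (by omega))
      (fun j hj => (mem_filter.1 (hHS hj)).2) ht hSc
  · have hlight := hg.card_mul_lt_ncard_of_light
      (filter_subset (fun j => ¬ s ≤ #{c ∈ Sᶜ | g j c ≠ 0}) S)
      fun j hj => not_le.1 (mem_filter.1 hj).2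
    have := card_filter_add_card_filter_not (s := S) (fun j => s ≤ #{c ∈ Sᶜ | g j c ≠ 0})
    exact ⟨0, hlight.trans_le' (hq.trans (Nat.mul_le_mul_right _ (by omega)))⟩

end IsSystematic

end Submodule

lemma le_sub_mul_of_lt_div {L k q : ℕ} (hq : 2 ≤ q) (h : ((L : ℝ) - 1) * q / (q - 1) < k) :
    L ≤ (k - (L - 1)) * (q - 1) := by
  obtain _ | a := L
  · exact Nat.zero_le _
  obtain ⟨b, rfl⟩ : ∃ b, q = b + 1 := ⟨q - 1, by omega⟩
  have hb : (0 : ℝ) < b := by exact_mod_cast (show 0 < b by omega)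
  push_cast at h
  rw [add_sub_cancel_right, add_sub_cancel_right, div_lt_iff₀ hb] at h
  have h' : a * (b + 1) < k * b := by exact_mod_cast h
  have hak : a ≤ k := (Nat.lt_of_mul_lt_mul_right (h'.trans_le' (by gcongr; omega))).le
  obtain ⟨e, rfl⟩ := Nat.exists_eq_add_of_le hak
  simp only [add_tsub_cancel_right, add_tsub_cancel_left]
  nlinarith

lemma add_one_mul_add_one_add_sub_one_div {L : ℕ} (hL : 0 < L) (s : ℕ) :
    ((L + 1) * (s + 1) + L - 1) / L = s + 2 + s / L := by
  rw [show (L + 1) * (s + 1) + L - 1 = s + L * (s + 2) by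
    obtain ⟨l, rfl⟩ : ∃ l, L = l + 1 := ⟨L - 1, by omega⟩
    ring_nf; omega, Nat.add_mul_div_left _ _ hL, add_comm]

theorem stmt_4_general (F : Type*) [Field F] [Fintype F] [DecidableEq F]
    (L n rn : ℕ)
    (hL : 2 ≤ L)
    (k : ℕ) (hk : k = n - ((L + 1) * rn + L - 1) / L + 1)
    (hcond : ((L : ℝ) - 1) * (Fintype.card F) / ((Fintype.card F) - 1) <
      (k : ℝ))
    (C : Submodule F (Fin n → F)) (hdim : Module.finrank F C = k) :
    ¬ (∀ v : Fin n → F,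
        {c ∈ (C : Set (Fin n → F)) | hammingDist c v ≤ rn}.ncard ≤ L) := by
  intro hball
  obtain ⟨S, g, hSk, hg⟩ := C.exists_isSystematic
  rw [hdim] at hSk
  have hkn : k ≤ n := hSk ▸ (card_le_univ S).trans_eq (Fintype.card_fin n)
  obtain _ | m := rn
  · rw [Nat.div_eq_of_lt (by omega)] at hk
    omega
  rw [add_one_mul_add_one_add_sub_one_div (by omega)] at hk
  -- `m / L = ⌈(m + 1) / L⌉ - 1`
  obtain ⟨v, hv⟩ := hg.exists_lt_ncard (t := m / L) (by omega)
    (hSk ▸ le_sub_mul_of_lt_div Fintype.one_lt_card hcond)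
    ((Nat.mul_div_le m L).trans_lt m.lt_succ_self)
    (by rw [card_compl, Fintype.card_fin]; omega)
  exact hv.not_ge (hball v)

/-- For a prime power q (card of a finite field F), L ≥ 2, r ∈ [0, L/(L+1))
with rn ∈ ℕ, if n - ⌈((L+1)/L)·rn⌉ + 1 > (L-1)·q/(q-1), then no linear code
over F of length n and dimension n - ⌈((L+1)/L)·rn⌉ + 1 is (r,L)
list-decodable. -/
theorem stmt_4 (F : Type*) [Field F] [Fintype F] [DecidableEq F]
    (L n rn : ℕ) (r : ℝ)
    (hL : 2 ≤ L)
    (hr0 : 0 ≤ r) (hr1 : r < (L : ℝ) / (L + 1))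
    (hrn : (rn : ℝ) = r * n)
    (k : ℕ) (hk : k = n - ((L + 1) * rn + L - 1) / L + 1)
    (hcond : ((L : ℝ) - 1) * (Fintype.card F) / ((Fintype.card F) - 1) <
      (k : ℝ))
    (C : Submodule F (Fin n → F)) (hdim : Module.finrank F C = k) :
    ¬ (∀ v : Fin n → F,
        {c ∈ (C : Set (Fin n → F)) | hammingDist c v ≤ rn}.ncard ≤ L) :=
  stmt_4_general F L n rn hL k hk hcond C hdim
end

section
/- Let C ⊆ [q]^n be (r,ℓ,L) list-recoverable with rn ∈ ℕ, t = ⌊ℓ·rn/(L+1-ℓ)⌋, and m = rn + t. Then for every product set B = S_{m+1} × ⋯ × S_n with each |S_i| ≤ ℓ, there are at most L codewords c ∈ C with (c_{m+1},…,c_n) ∈ B. -/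
/-!
Suppose `L + 1` codewords of `C` lie in the product set on the coordinates `≥ m`. On each of the
first `m` coordinates drop `d = L + 1 - ℓ` of them and take as list the symbols of the other `ℓ`.
Dropping them in cyclic order (coordinate `i` drops the codewords `i d, …, i d + d - 1` modulo
`L + 1`) drops each codeword at most `⌈m d / (L + 1)⌉` times, and the choice of `t = ⌊ℓ rn / d⌋`
makes `m d ≤ rn (L + 1)`. So all `L + 1` codewords are within `rn` errors of lists of size `ℓ`,
contradicting list-recoverability.
-/

open Finset

def cyclicBlock (Λ d : ℕ) [NeZero Λ] (i : ℕ) : Finset (Fin Λ) :=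
  (range d).image fun k => Fin.ofNat Λ (i * d + k)

section cyclicBlock

variable {Λ d : ℕ} [NeZero Λ]

theorem mem_cyclicBlock {i : ℕ} {j : Fin Λ} :
    j ∈ cyclicBlock Λ d i ↔ ∃ k < d, (i * d + k) % Λ = j := by
  simp [cyclicBlock, Fin.ext_iff]

theorem card_cyclicBlock (hd : d ≤ Λ) (i : ℕ) : #(cyclicBlock Λ d i) = d := by
  rw [cyclicBlock, card_image_of_injOn, card_range]
  intro k₁ hk₁ k₂ hk₂ h
  simp only [coe_range, Set.mem_Iio] at hk₁ hk₂
  have h' : (i * d + k₁) % Λ = (i * d + k₂) % Λ := by simpa [Fin.ext_iff] using h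
  have := Nat.ModEq.add_left_cancel' _ h'
  rwa [Nat.ModEq, Nat.mod_eq_of_lt (by omega), Nat.mod_eq_of_lt (by omega)] at this

theorem card_filter_mem_cyclicBlock_le {m rn : ℕ} (hmd : m * d ≤ rn * Λ) (j : Fin Λ) :
    #{i ∈ range m | j ∈ cyclicBlock Λ d i} ≤ rn := by
  have hΛ : 0 < Λ := Nat.pos_of_neZero Λ
  calc #{i ∈ range m | j ∈ cyclicBlock Λ d i}
      ≤ #{x ∈ range (m * d) | x ≡ j [MOD Λ]} := by
        refine card_le_card_of_surjOn (· / d) ?_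
        intro i hi
        simp only [coe_filter, mem_range, Set.mem_ofPred_eq, mem_cyclicBlock] at hi
        obtain ⟨him, k, hk, hkj⟩ := hi
        have hblock : (i + 1) * d ≤ m * d := Nat.mul_le_mul_right d him
        refine ⟨i * d + k, ?_, Nat.div_eq_of_lt_le (by omega) (by rw [Nat.add_mul]; omega)⟩
        simp only [coe_filter, mem_range, Set.mem_ofPred_eq, Nat.ModEq, hkj,
          Nat.mod_eq_of_lt j.isLt, and_true]
        rw [Nat.add_mul, one_mul] at hblock
        omega
    _ = Nat.count (· ≡ j [MOD Λ]) (m * d) := (Nat.count_eq_card_filter_range _ _).symm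
    _ ≤ Nat.count (· ≡ j [MOD Λ]) (rn * Λ) := Nat.count_monotone _ hmd
    _ = rn := by simp [Nat.count_modEq_card _ hΛ, hΛ]

end cyclicBlock

theorem exists_lists_of_mem_on_tail {α : Type*} [DecidableEq α] {n Λ ℓ d m rn : ℕ} [NeZero Λ]
    (hd : d ≤ Λ) (hΛ : Λ ≤ ℓ + d) (hmd : m * d ≤ rn * Λ)
    (c : Fin Λ → Fin n → α) (S : Fin n → Finset α) (hS : ∀ i, #(S i) ≤ ℓ)
    (hc : ∀ j (i : Fin n), m ≤ (i : ℕ) → c j i ∈ S i) :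
    ∃ S' : Fin n → Finset α, (∀ i, #(S' i) ≤ ℓ) ∧ ∀ j, #{i : Fin n | c j i ∉ S' i} ≤ rn := by
  set S' : Fin n → Finset α :=
    fun i => if (i : ℕ) < m then (cyclicBlock Λ d i)ᶜ.image (c · i) else S i
  refine ⟨S', fun i => ?_, fun j => ?_⟩
  · by_cases hi : (i : ℕ) < m
    · calc #(S' i) ≤ #(cyclicBlock Λ d i)ᶜ := by simp only [S', if_pos hi]; exact card_image_le
        _ = Λ - d := by rw [card_compl, Fintype.card_fin, card_cyclicBlock hd]
        _ ≤ ℓ := by omega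
    · simpa only [S', if_neg hi] using hS i
  · have hbad (i : Fin n) (hij : c j i ∉ S' i) : (i : ℕ) < m ∧ j ∈ cyclicBlock Λ d i := by
      by_cases hi : (i : ℕ) < m
      · simp only [S', if_pos hi] at hij
        exact ⟨hi, by_contra fun hj => hij (mem_image_of_mem _ (mem_compl.2 hj))⟩
      · simp only [S', if_neg hi] at hij
        exact absurd (hc j i (not_lt.1 hi)) hij
    calc #{i : Fin n | c j i ∉ S' i} ≤ #{i : Fin n | (i : ℕ) < m ∧ j ∈ cyclicBlock Λ d i} :=
          card_le_card (monotone_filter_right _ fun i _ => hbad i)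
      _ ≤ #{i ∈ range m | j ∈ cyclicBlock Λ d i} :=
          card_le_card_of_injOn Fin.val (fun i hi => by simpa using hi) Fin.val_injective.injOn
      _ ≤ rn := card_filter_mem_cyclicBlock_le hmd j

theorem add_div_mul_le (a b d : ℕ) : (a + b / d) * d ≤ a * d + b := by
  rw [Nat.add_mul]
  exact Nat.add_le_add_left (Nat.div_mul_le_self b d) _

theorem stmt_11_general (q ℓ L n rn : ℕ)
    (hL : ℓ ≤ L)
    (C : Finset (Fin n → Fin q))
    (hLR : ∀ S : Fin n → Finset (Fin q), (∀ i, (S i).card ≤ ℓ) →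
      (C.filter (fun c =>
        (Finset.univ.filter (fun i => c i ∉ S i)).card ≤ rn)).card ≤ L)
    (m : ℕ) (hm : m = rn + ℓ * rn / (L + 1 - ℓ))
    (S : Fin n → Finset (Fin q)) (hS : ∀ i, (S i).card ≤ ℓ) :
    (C.filter (fun c => ∀ i : Fin n, m ≤ (i : ℕ) → c i ∈ S i)).card ≤ L := by
  set F := C.filter (fun c => ∀ i : Fin n, m ≤ (i : ℕ) → c i ∈ S i)
  by_contra! hF
  obtain ⟨e⟩ : Nonempty (Fin (L + 1) ↪ F) :=
    Function.Embedding.nonempty_of_card_le (by simpa using hF)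
  have hmd : m * (L + 1 - ℓ) ≤ rn * (L + 1) := by
    calc m * (L + 1 - ℓ) ≤ rn * (L + 1 - ℓ) + ℓ * rn := hm ▸ add_div_mul_le _ _ _
      _ = rn * (L + 1 - ℓ + ℓ) := by ring
      _ = rn * (L + 1) := by rw [Nat.sub_add_cancel (by omega)]
  obtain ⟨S', hS', hfew⟩ := exists_lists_of_mem_on_tail (Nat.sub_le _ _) (by omega) hmd
    (fun j => (e j : Fin n → Fin q)) S hS fun j => (mem_filter.1 (e j).2).2
  have hlarge : L + 1 ≤ #{c ∈ C | #{i | c i ∉ S' i} ≤ rn} := by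
    simpa using card_le_card_of_injOn (s := univ) (fun j => (e j : Fin n → Fin q))
      (fun j _ => mem_filter.2 ⟨(mem_filter.1 (e j).2).1, hfew j⟩)
      (Subtype.val_injective.comp e.injective).injOn
  exact absurd (hLR S' hS') (by omega)

/-- Let C be (r,ℓ,L) list-recoverable, t = ⌊ℓ·rn/(L+1-ℓ)⌋ and m = rn + t.
For any product set B = S_{m+1} × ⋯ × S_n with |S_i| ≤ ℓ, at most L codewords
c ∈ C satisfy (c_{m+1},…,c_n) ∈ B. -/
theorem stmt_11 (q ℓ L n rn : ℕ) (r : ℝ)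
    (hq : 2 ≤ q) (hℓ : 1 ≤ ℓ) (hL : ℓ ≤ L)
    (hr0 : 0 ≤ r) (hr1 : r < 1 - (ℓ : ℝ) / (L + 1))
    (hrn : (rn : ℝ) = r * n)
    (C : Finset (Fin n → Fin q))
    (hLR : ∀ S : Fin n → Finset (Fin q), (∀ i, (S i).card ≤ ℓ) →
      (C.filter (fun c =>
        (Finset.univ.filter (fun i => c i ∉ S i)).card ≤ rn)).card ≤ L)
    (m : ℕ) (hm : m = rn + ℓ * rn / (L + 1 - ℓ))
    (S : Fin n → Finset (Fin q)) (hS : ∀ i, (S i).card ≤ ℓ) :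
    (C.filter (fun c => ∀ i : Fin n, m ≤ (i : ℕ) → c i ∈ S i)).card ≤ L :=
  stmt_11_general q ℓ L n rn hL C hLR m hm S hS
end

section
/- Let L ≥ 1 be an integer, γ ∈ (0,1), r ∈ [0, L/(L+1)) with rn ∈ ℕ, and q sufficiently large as a function of n, r, L, γ. Let C ⊆ [q]^n be an (r,L) list-decodable code with |C| = q^(n - ⌊((L+1)/L)·rn⌋ - ε) for an integer ε ≥ 0 satisfying (L-1)(ε+1) ≤ ⌊rn/L⌋. Then C contains a subcode of size at least γ|C| with minimum Hamming distance at least ⌊((L+1)/L)·rn⌋ - (L-1)(ε+1) + 1. -/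
/-!
Remove from `C` every codeword that has another codeword within distance `t`. If `x ≠ y` are such
a pair, they differ only inside some set `T` of `w = ρ + b` coordinates. Any `L + 1` codewords that
agree with `x` outside `T`, among them `x` and `y`, would have a common word within distance `ρ`:
inside `T` give each of them `b` coordinates of its own, except that `x` and `y` may share the
coordinates on which they agree. List decodability forbids this, so each fibre of the restriction
to the complement of `T` that contains such an `x` has at most `L` codewords. Summing over `T`, at
most `(n choose w) · L · q ^ (n - w)` codewords are removed, which is a `(1 - γ)`-fraction of
`|C| = q ^ (n - w + 1)` once `q` is large.
-/

open Finset

variable {ι α : Type*}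

theorem exists_eq_on_blocks [DecidableEq ι] (base : ι → α) :
    ∀ (ws : List ((ι → α) × ℕ)) (R : Finset ι), (ws.map Prod.snd).sum ≤ #R →
      ∃ v : ι → α, (∀ j ∉ R, v j = base j) ∧
        ∀ p ∈ ws, ∃ P ⊆ R, #P = p.2 ∧ ∀ j ∈ P, v j = p.1 j
  | [], _, _ => ⟨base, fun _ _ => rfl, by simp⟩
  | (z, k) :: ws, R, hR => by
    simp only [List.map_cons, List.sum_cons] at hR
    obtain ⟨P, hPR, hP⟩ := exists_subset_card_eq (s := R) (n := k) (by omega)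
    obtain ⟨v, hv_out, hv_blocks⟩ :=
      exists_eq_on_blocks base ws (R \ P) (by rw [card_sdiff_of_subset hPR]; omega)
    refine ⟨P.piecewise z v, fun j hj => ?_, ?_⟩
    · rw [piecewise_eq_of_notMem _ _ _ fun h => hj (hPR h)]
      exact hv_out j fun h => hj (mem_sdiff.1 h).1
    rintro p (_ | ⟨_, hp⟩)
    · exact ⟨P, hPR, hP, fun j hj => piecewise_eq_of_mem _ _ _ hj⟩
    · obtain ⟨P', hP'R, hP', hvP'⟩ := hv_blocks p hp
      refine ⟨P', hP'R.trans sdiff_subset, hP', fun j hj => ?_⟩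
      rw [piecewise_eq_of_notMem _ _ _ (mem_sdiff.1 (hP'R hj)).2]
      exact hvP' j hj

variable [Fintype ι] [DecidableEq α]

def crowded (C : Finset (ι → α)) (t : ℕ) : Finset (ι → α) :=
  {x ∈ C | ∃ y ∈ C, y ≠ x ∧ hammingDist x y ≤ t}

theorem crowded_subset (C : Finset (ι → α)) (t : ℕ) : crowded C t ⊆ C := filter_subset _ _

theorem lt_hammingDist_of_mem_sdiff_crowded {C : Finset (ι → α)} {t : ℕ} {x y : ι → α}
    (hx : x ∈ C \ crowded C t) (hy : y ∈ C \ crowded C t) (hxy : x ≠ y) :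
    t < hammingDist x y := by
  obtain ⟨hxC, hx⟩ := mem_sdiff.1 hx
  by_contra! h
  exact hx (mem_filter.2 ⟨hxC, y, (mem_sdiff.1 hy).1, hxy.symm, h⟩)

variable [DecidableEq ι]

theorem hammingDist_add_card_le {v z : ι → α} {P M : Finset ι} (hPM : P ⊆ M)
    (hP : ∀ j ∈ P, v j = z j) (hM : ∀ j ∉ M, v j = z j) : hammingDist v z + #P ≤ #M := by
  have hsub : ({j | v j ≠ z j} : Finset ι) ⊆ M \ P := fun j hj => by
    simp only [mem_filter, mem_univ, true_and] at hj
    exact mem_sdiff.2 ⟨by_contra fun h => hj (hM j h), fun h => hj (hP j h)⟩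
  have := card_le_card hsub
  rw [card_sdiff_of_subset hPM] at this
  have := card_le_card hPM
  unfold hammingDist
  omega

theorem exists_close_word_of_shared_coords {S : Finset (ι → α)} {T G : Finset ι}
    {x y : ι → α} {b : ℕ} (hST : ∀ z ∈ S, ∀ j ∉ T, z j = x j) (hGT : G ⊆ T)
    (hG : ∀ j ∈ G, x j = y j) (hGb : #G ≤ b)
    (hbudget : 2 * (b - #G) + #(S \ {x, y}) * b ≤ #T - #G) :
    ∃ v : ι → α, ∀ z ∈ S, hammingDist v z + b ≤ #T := by
  have hR : #(T \ G) = #T - #G := card_sdiff_of_subset hGT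
  have hGT' := card_le_card hGT
  obtain ⟨v, hv_out, hv_blocks⟩ := exists_eq_on_blocks x
    ((x, b - #G) :: (y, b - #G) :: (S \ {x, y}).toList.map (·, b)) (T \ G) (by
      simp only [List.map_cons, List.sum_cons, List.map_map, Function.comp_def, List.map_const',
        List.sum_replicate, length_toList, smul_eq_mul, hR]
      omega)
  have hv_x : ∀ j ∉ T \ G, v j = x j := hv_out
  refine ⟨v, fun z hz => ?_⟩
  obtain rfl | rfl | hz' : z = x ∨ z = y ∨ z ∈ S \ {x, y} := by
    by_cases h : z = x ∨ z = y
    · exact h.imp_right Or.inl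
    · exact Or.inr (Or.inr (mem_sdiff.2 ⟨hz, by simpa using h⟩))
  · obtain ⟨P, hP, hPcard, hvP⟩ : ∃ P ⊆ T \ G, #P = b - #G ∧ ∀ j ∈ P, v j = z j :=
      hv_blocks (z, b - #G) List.mem_cons_self
    have := hammingDist_add_card_le hP hvP hv_x
    omega
  · obtain ⟨P, hP, hPcard, hvP⟩ : ∃ P ⊆ T \ G, #P = b - #G ∧ ∀ j ∈ P, v j = z j :=
      hv_blocks (z, b - #G) (List.mem_cons_of_mem _ List.mem_cons_self)
    have := hammingDist_add_card_le hP hvP fun j hj => by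
      rw [hv_x j hj]
      rcases not_and_or.1 ((not_congr mem_sdiff).1 hj) with hjT | hjG
      · exact (hST z hz j hjT).symm
      · exact hG j (not_not.1 hjG)
    omega
  · obtain ⟨P, hP, hPcard, hvP⟩ : ∃ P ⊆ T \ G, #P = b ∧ ∀ j ∈ P, v j = z j :=
      hv_blocks (z, b) (List.mem_cons_of_mem _ (List.mem_cons_of_mem _
        (List.mem_map_of_mem (mem_toList.2 hz'))))
    have := hammingDist_add_card_le (hP.trans sdiff_subset) hvP fun j hj => by
      rw [hv_x j fun h => hj (mem_sdiff.1 h).1, hST z hz j hj]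
    omega

theorem exists_close_word_of_agree_outside {S : Finset (ι → α)} {T : Finset ι} {x y : ι → α}
    {b : ℕ} (hx : x ∈ S) (hy : y ∈ S) (hxy : x ≠ y) (hST : ∀ z ∈ S, ∀ j ∉ T, z j = x j)
    (hb₁ : (#S - 1) * b ≤ #T) (hb₂ : #S * b + hammingDist x y ≤ 2 * #T) :
    ∃ v : ι → α, ∀ z ∈ S, hammingDist v z + b ≤ #T := by
  set A : Finset ι := {j | x j ≠ y j}
  have hA : #A = hammingDist x y := rfl
  have hAT : A ⊆ T := fun j hj => by_contra fun hjT =>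
    (mem_filter.1 hj).2 (hST y hy j hjT).symm
  -- `x` and `y` agree off `A`; sharing `min b (#T - #A)` such coordinates is what saves room.
  obtain ⟨G, hGTA, hG⟩ := exists_subset_card_eq (s := T \ A) (n := min b (#T - #A))
    (by rw [card_sdiff_of_subset hAT]; omega)
  have hS : #(S \ {x, y}) + 2 = #S := by
    rw [← card_pair hxy]
    exact card_sdiff_add_card_eq_card (by simp [insert_subset_iff, hx, hy])
  rw [← hS] at hb₁ hb₂
  refine exists_close_word_of_shared_coords hST (hGTA.trans sdiff_subset)
    (fun j hj => by simpa [A] using (mem_sdiff.1 (hGTA hj)).2) (by omega) ?_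
  rw [Nat.add_sub_assoc one_le_two, add_mul] at hb₁
  rw [add_mul] at hb₂
  omega

theorem card_filter_agree_outside_le {C : Finset (ι → α)} {ρ L b : ℕ}
    (hC : ∀ v, #{c ∈ C | hammingDist c v ≤ ρ} ≤ L) {T : Finset ι} (hT : #T = ρ + b)
    (hb₁ : (L - 1) * b ≤ ρ) {x y : ι → α} (hx : x ∈ C) (hy : y ∈ C) (hxy : x ≠ y)
    (hyT : ∀ j ∉ T, y j = x j) (hb₂ : (L - 1) * b + hammingDist x y ≤ 2 * ρ) :
    #{z ∈ C | ∀ j ∉ T, z j = x j} ≤ L := by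
  have hL : 0 < L := (card_pos.2 ⟨x, mem_filter.2 ⟨hx, by simp⟩⟩).trans_le (hC x)
  by_contra! hF
  obtain ⟨S, hxyS, hSF, hS⟩ := exists_subsuperset_card_eq (n := L + 1)
    (show {x, y} ⊆ {z ∈ C | ∀ j ∉ T, z j = x j} by
      simpa [insert_subset_iff, hx, hy] using hyT)
    (by rw [card_pair hxy]; omega) hF
  have hLb : (L - 1) * b + b = L * b := by
    rw [Nat.sub_one_mul]; exact Nat.sub_add_cancel (Nat.le_mul_of_pos_left b hL)
  obtain ⟨v, hv⟩ := exists_close_word_of_agree_outside (hxyS (by simp)) (hxyS (by simp)) hxy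
    (fun z hz => (mem_filter.1 (hSF hz)).2) (b := b)
    (by rw [hS, hT, Nat.add_sub_cancel]; omega) (by rw [hS, hT, add_mul, one_mul]; omega)
  have hSv : S ⊆ {c ∈ C | hammingDist c v ≤ ρ} := fun z hz => by
    have := hv z hz
    rw [hammingDist_comm] at this
    exact mem_filter.2 ⟨(mem_filter.1 (hSF hz)).1, by omega⟩
  have := (card_le_card hSv).trans (hC v)
  omega

theorem card_filter_exists_close_agree_outside_le [Fintype α] {C : Finset (ι → α)} {ρ L b t : ℕ}
    (hC : ∀ v, #{c ∈ C | hammingDist c v ≤ ρ} ≤ L) {T : Finset ι} (hT : #T = ρ + b)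
    (hb₁ : (L - 1) * b ≤ ρ) (hb₂ : (L - 1) * b + t ≤ 2 * ρ) :
    #{x ∈ C | ∃ y ∈ C, y ≠ x ∧ (∀ j ∉ T, y j = x j) ∧ hammingDist x y ≤ t} ≤
      L * Fintype.card α ^ (Fintype.card ι - #T) := by
  set restrict : (ι → α) → (↥(Tᶜ) → α) := fun x j => x j
  have hfiber : ∀ x z, restrict z = restrict x → ∀ j ∉ T, z j = x j :=
    fun x z h j hj => congrFun h ⟨j, mem_compl.2 hj⟩
  calc _ ≤ L * #(image restrict {x ∈ C | ∃ y ∈ C, y ≠ x ∧ (∀ j ∉ T, y j = x j) ∧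
          hammingDist x y ≤ t}) := by
        refine card_le_mul_card_image _ L fun a ha => ?_
        obtain ⟨x, hx, rfl⟩ := mem_image.1 ha
        obtain ⟨hxC, y, hyC, hyx, hyT, hxy⟩ := mem_filter.1 hx
        refine (card_le_card fun z hz => ?_).trans (card_filter_agree_outside_le hC hT hb₁ hxC
          hyC hyx.symm hyT (by omega))
        obtain ⟨hz, hzx⟩ := mem_filter.1 hz
        exact mem_filter.2 ⟨(mem_filter.1 hz).1, hfiber x z hzx⟩
    _ ≤ L * Fintype.card α ^ (Fintype.card ι - #T) := by
        gcongr
        refine (card_le_univ _).trans_eq ?_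
        rw [Fintype.card_fun, Fintype.card_coe, card_compl]

theorem card_crowded_le [Fintype α] {C : Finset (ι → α)} {ρ L b t : ℕ}
    (hC : ∀ v, #{c ∈ C | hammingDist c v ≤ ρ} ≤ L) (hb₁ : (L - 1) * b ≤ ρ)
    (hb₂ : (L - 1) * b + t ≤ 2 * ρ) (ht : t ≤ ρ + b) (hι : ρ + b ≤ Fintype.card ι) :
    #(crowded C t) ≤
      (Fintype.card ι).choose (ρ + b) * (L * Fintype.card α ^ (Fintype.card ι - (ρ + b))) := by
  have hcover : crowded C t ⊆ (powersetCard (ρ + b) univ).biUnion fun T =>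
      {x ∈ C | ∃ y ∈ C, y ≠ x ∧ (∀ j ∉ T, y j = x j) ∧ hammingDist x y ≤ t} := by
    intro x hx
    obtain ⟨hxC, y, hyC, hyx, hxy⟩ := mem_filter.1 hx
    obtain ⟨T, hAT, -, hT⟩ := exists_subsuperset_card_eq (subset_univ {j | x j ≠ y j})
      (show hammingDist x y ≤ ρ + b by omega) (by rwa [card_univ])
    refine mem_biUnion.2 ⟨T, mem_powersetCard_univ.2 hT, mem_filter.2 ⟨hxC, y, hyC, hyx,
      fun j hj => by_contra fun h => hj (hAT (mem_filter.2 ⟨mem_univ j, Ne.symm h⟩)), hxy⟩⟩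
  calc #(crowded C t) ≤ _ := card_le_card hcover
    _ ≤ _ := card_biUnion_le
    _ ≤ #(powersetCard (ρ + b) (univ : Finset ι)) •
          (L * Fintype.card α ^ (Fintype.card ι - (ρ + b))) :=
        sum_le_card_nsmul _ _ _ fun T hT => by
          rw [← mem_powersetCard_univ.1 hT]
          exact card_filter_exists_close_agree_outside_le hC (mem_powersetCard_univ.1 hT) hb₁ hb₂
    _ = _ := by rw [card_powersetCard, card_univ, smul_eq_mul]

theorem exists_subcode_forall_lt_hammingDist [Fintype α] {C : Finset (ι → α)} {ρ L b t : ℕ}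
    (hC : ∀ v, #{c ∈ C | hammingDist c v ≤ ρ} ≤ L) (hb₁ : (L - 1) * b ≤ ρ)
    (hb₂ : (L - 1) * b + t ≤ 2 * ρ) (ht : t ≤ ρ + b) (hι : ρ + b ≤ Fintype.card ι) :
    ∃ C' ⊆ C, #C ≤ #C' + (Fintype.card ι).choose (ρ + b) *
        (L * Fintype.card α ^ (Fintype.card ι - (ρ + b))) ∧
      ∀ x ∈ C', ∀ y ∈ C', x ≠ y → t < hammingDist x y := by
  refine ⟨C \ crowded C t, sdiff_subset, ?_,
    fun x hx y hy hxy => lt_hammingDist_of_mem_sdiff_crowded hx hy hxy⟩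
  have := card_crowded_le hC hb₁ hb₂ ht hι
  have := card_sdiff_add_card_eq_card (crowded_subset C t)
  omega

theorem Nat.add_one_mul_div_of_pos {L : ℕ} (hL : 0 < L) (m : ℕ) :
    (L + 1) * m / L = m + m / L := by
  rw [add_mul, one_mul, add_comm, Nat.add_mul_div_left _ _ hL, add_comm]

theorem Nat.sub_one_mul_div_add_div_le {L : ℕ} (hL : 0 < L) (m : ℕ) :
    (L - 1) * (m / L) + m / L ≤ m := by
  rw [Nat.sub_one_mul, Nat.sub_add_cancel (Nat.le_mul_of_pos_left _ hL)]
  exact Nat.mul_div_le m L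

theorem mul_le_of_le_add_mul_pow {γ : ℝ} {c c' N q k : ℕ} (hN : (N : ℝ) ≤ (1 - γ) * q)
    (hc : c ≤ c' + N * q ^ k) (hcq : c = q ^ (k + 1)) : γ * c ≤ c' := by
  have h₁ : (c : ℝ) ≤ c' + N * q ^ k := by exact_mod_cast hc
  have h₂ : (N : ℝ) * q ^ k ≤ (1 - γ) * c := by
    rw [hcq, Nat.cast_pow, pow_succ, mul_comm _ (q : ℝ), ← mul_assoc]
    exact mul_le_mul_of_nonneg_right hN (by positivity)
  linarith

theorem stmt_13_general (L n rn ε : ℕ) (γ : ℝ)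
    (hL : 1 ≤ L) (hγ1 : γ < 1)
    (hε : (L - 1) * (ε + 1) ≤ rn / L) :
    ∃ Q : ℕ, ∀ q : ℕ, Q ≤ q →
      ∀ C : Finset (Fin n → Fin q),
        (∀ v : Fin n → Fin q,
          (C.filter (fun c => hammingDist c v ≤ rn)).card ≤ L) →
        C.card = q ^ (n - ((L + 1) * rn) / L - ε) →
        ∃ C' ⊆ C, γ * C.card ≤ (C'.card : ℝ) ∧
          ∀ c₁ ∈ C', ∀ c₂ ∈ C', c₁ ≠ c₂ →
            ((L + 1) * rn) / L - (L - 1) * (ε + 1) + 1 ≤ hammingDist c₁ c₂ := by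
  -- `rn + b = ⌊(L + 1) rn / L⌋ + ε + 1`, so that `|C| = q ^ (n - (rn + b) + 1)`.
  set b := rn / L + ε + 1
  have hm := Nat.add_one_mul_div_of_pos hL rn
  have hf := Nat.sub_one_mul_div_add_div_le hL rn
  have hb : (L - 1) * b = (L - 1) * (rn / L) + (L - 1) * (ε + 1) := by rw [← mul_add]; rfl
  refine ⟨⌈(n.choose (rn + b) * L : ℝ) / (1 - γ)⌉₊, fun q hq C hC hCcard => ?_⟩
  by_cases hn : rn + b ≤ n
  · obtain ⟨C', hC'C, hcard, hdist⟩ := exists_subcode_forall_lt_hammingDist hC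
      (b := b) (t := (L + 1) * rn / L - (L - 1) * (ε + 1)) (by omega) (by omega) (by omega)
      (by simpa using hn)
    simp only [Fintype.card_fin] at hcard
    refine ⟨C', hC'C, mul_le_of_le_add_mul_pow (N := n.choose (rn + b) * L) (q := q)
      (k := n - (rn + b)) ?_ (hcard.trans_eq (by ring)) ?_, hdist⟩
    · have := (div_le_iff₀ (sub_pos.2 hγ1)).1 (Nat.ceil_le.1 hq)
      push_cast
      linarith
    · rw [hCcard]
      congr 1
      omega
  · have hC1 : #C = 1 := by
      rw [hCcard, show n - (L + 1) * rn / L - ε = 0 by omega, pow_zero]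
    refine ⟨C, subset_rfl, by rw [hC1]; push_cast; linarith,
      fun c₁ h₁ c₂ h₂ hne => absurd (card_le_one.1 hC1.le c₁ h₁ c₂ h₂) hne⟩

/-- For L ≥ 1, γ ∈ (0,1), r ∈ [0, L/(L+1)) with rn ∈ ℕ, and q sufficiently
large (as a function of n, r, L, γ): every (r,L) list-decodable code
C ⊆ [q]^n with |C| = q^(n - ⌊((L+1)/L)·rn⌋ - ε), where ε ≥ 0 is an integer
with (L-1)(ε+1) ≤ ⌊rn/L⌋, contains a subcode of size at least γ|C| and
minimum distance at least ⌊((L+1)/L)·rn⌋ - (L-1)(ε+1) + 1. -/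
theorem stmt_13 (L n rn ε : ℕ) (r γ : ℝ)
    (hL : 1 ≤ L) (hγ0 : 0 < γ) (hγ1 : γ < 1)
    (hr0 : 0 ≤ r) (hr1 : r < (L : ℝ) / (L + 1))
    (hrn : (rn : ℝ) = r * n)
    (hε : (L - 1) * (ε + 1) ≤ rn / L) :
    ∃ Q : ℕ, ∀ q : ℕ, Q ≤ q →
      ∀ C : Finset (Fin n → Fin q),
        (∀ v : Fin n → Fin q,
          (C.filter (fun c => hammingDist c v ≤ rn)).card ≤ L) →
        C.card = q ^ (n - ((L + 1) * rn) / L - ε) →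
        ∃ C' ⊆ C, γ * C.card ≤ (C'.card : ℝ) ∧
          ∀ c₁ ∈ C', ∀ c₂ ∈ C', c₁ ≠ c₂ →
            ((L + 1) * rn) / L - (L - 1) * (ε + 1) + 1 ≤ hammingDist c₁ c₂ :=
  stmt_13_general L n rn ε γ hL hγ1 hε
end

section
/- Let C ⊆ [q]^n be an (r,L) list-decodable code with rn ∈ ℕ, rn = La + b with 0 ≤ b < L, m = ⌊((L+1)/L)·rn⌋ + ε + 1 where ε ≥ 0 is an integer with (L-1)(ε+1) ≤ ⌊rn/L⌋. If w ∈ [q]^{n-m} is bad for a set I ⊆ [n] of size n-m (meaning there exist two codewords c¹, c² ∈ C with c¹_I = c²_I = w agreeing on at least L(ε+1) additional coordinates outside I), then there are at most L codewords c ∈ C with c_I = w. -/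
/-!
Suppose more than `L` codewords agree with `w` on `I`; pick `L + 1` of them containing the bad
pair `c₁, c₂`. Put `x = |Iᶜ| - rn` and let `S` be a set of `min (L (ε + 1)) x` coordinates
outside `I` where `c₁ = c₂`. Build a centre `v` that agrees with `w` on `I`, with `c₁` on `S`,
and with each chosen codeword on a block of its own among the remaining coordinates: `x - |S|`
coordinates for `c₁` and `c₂`, which already agree with `v` on `S`, and `x` for the others.
Every chosen codeword then agrees with `v` on `|I| + x` coordinates, so lies within `rn` of `v`,
contradicting list decodability. The blocks fit into `Iᶜ \ S` because `|Iᶜ| ≤ m`; this is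
where the choice of `m` and the condition on `ε` enter.
-/

open Finset

section Words

variable {ι α : Type*} [DecidableEq ι]

theorem exists_eqOn_blocks_of_sum_le_card (u : ι → α) (need : (ι → α) → ℕ)
    (T : Finset (ι → α)) (D : Finset ι) (h : ∑ c ∈ T, need c ≤ #D) :
    ∃ v : ι → α, (∀ i ∉ D, v i = u i) ∧
      ∀ c ∈ T, ∃ B ⊆ D, #B = need c ∧ Set.EqOn v c B := by
  classical
  induction T using Finset.induction_on generalizing D with
  | empty => exact ⟨u, fun _ _ => rfl, by simp⟩
  | @insert c T hc ih =>
    rw [sum_insert hc] at h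
    obtain ⟨B, hBD, hB⟩ := exists_subset_card_eq (le_of_add_le_left h)
    obtain ⟨v, hvu, hvT⟩ := ih (D \ B) (by rw [card_sdiff_of_subset hBD]; omega)
    refine ⟨B.piecewise c v, fun i hi => ?_, ?_⟩
    · rw [piecewise_eq_of_notMem _ _ _ (fun hiB => hi (hBD hiB))]
      exact hvu i (fun hiD => hi (mem_sdiff.1 hiD).1)
    rintro c' hc'
    rcases mem_insert.1 hc' with rfl | hc'T
    · exact ⟨B, hBD, hB, fun i hi => piecewise_eq_of_mem _ _ _ hi⟩
    obtain ⟨B', hB'D, hB', hvB'⟩ := hvT c' hc'T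
    refine ⟨B', hB'D.trans sdiff_subset, hB', fun i hi => ?_⟩
    rw [piecewise_eq_of_notMem _ _ _ (mem_sdiff.1 (hB'D hi)).2]
    exact hvB' hi

variable [Fintype ι] [DecidableEq α]

theorem hammingDist_le_card_sub_of_eqOn {x y : ι → α} {A : Finset ι} (h : Set.EqOn x y A) :
    hammingDist x y ≤ Fintype.card ι - #A := by
  rw [← card_compl]
  exact card_le_card fun i hi => mem_compl.2 fun hiA => (mem_filter.1 hi).2 (h hiA)

theorem exists_hammingDist_le_of_sum_le_card (u : ι → α) (T : Finset (ι → α))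
    (K : Finset ι) (G : (ι → α) → Finset ι) (hGK : ∀ c ∈ T, G c ⊆ K)
    (hG : ∀ c ∈ T, Set.EqOn c u (G c)) (p : ℕ) (h : ∑ c ∈ T, (p - #(G c)) ≤ #Kᶜ) :
    ∃ v : ι → α, ∀ c ∈ T, hammingDist c v ≤ Fintype.card ι - p := by
  obtain ⟨v, hvK, hvT⟩ := exists_eqOn_blocks_of_sum_le_card u _ T Kᶜ h
  refine ⟨v, fun c hc => ?_⟩
  obtain ⟨B, hBK, hB, hvB⟩ := hvT c hc
  have hdisj : Disjoint (G c) B :=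
    disjoint_left.2 fun i hiG hiB => mem_compl.1 (hBK hiB) (hGK c hc hiG)
  have hagree : Set.EqOn c v ↑(G c ∪ B) := by
    intro i hi
    rcases mem_union.1 hi with hiG | hiB
    · rw [hG c hc hiG, hvK i fun hiK => mem_compl.1 hiK (hGK c hc hiG)]
    · exact (hvB hiB).symm
  calc hammingDist c v ≤ Fintype.card ι - #(G c ∪ B) := hammingDist_le_card_sub_of_eqOn hagree
    _ ≤ Fintype.card ι - p := by rw [card_union_of_disjoint hdisj, hB]; omega

theorem exists_hammingDist_le_of_common_agreement (u : ι → α) (T P : Finset (ι → α))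
    (hPT : P ⊆ T) (I S : Finset ι) (hIS : Disjoint I S) (hI : ∀ c ∈ T, Set.EqOn c u I)
    (hS : ∀ c ∈ P, Set.EqOn c u S) (x : ℕ) (hSx : #S ≤ x)
    (hroom : (#T - #P) * x + #P * (x - #S) ≤ Fintype.card ι - (#I + #S)) :
    ∃ v : ι → α, ∀ c ∈ T, hammingDist c v ≤ Fintype.card ι - (#I + x) := by
  have hIS_card : #(I ∪ S) = #I + #S := card_union_of_disjoint hIS
  refine exists_hammingDist_le_of_sum_le_card u T (I ∪ S)
    (fun c => if c ∈ P then I ∪ S else I) (fun c _ => by split_ifs <;> simp) ?_ (#I + x) ?_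
  · intro c hc
    split_ifs with hcP
    · simpa only [coe_union] using (hI c hc).union (hS c hcP)
    · exact hI c hc
  · simp only [apply_ite card, apply_ite (#I + x - ·), sum_ite, filter_mem_eq_inter,
      inter_eq_right.2 hPT, filter_notMem_eq_sdiff, sum_const, card_sdiff_of_subset hPT,
      hIS_card, smul_eq_mul, card_compl]
    rw [show #I + x - (#I + #S) = x - #S by omega, show #I + x - #I = x by omega]
    omega

end Words

theorem sub_one_mul_add_two_mul_sub_le_sub (L rn ε t x s : ℕ) (hL : 1 ≤ L)
    (hε : (L - 1) * (ε + 1) ≤ rn / L) (ht : t ≤ (L + 1) * rn / L + ε + 1)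
    (hx : x = t - rn) (hs : s = min (L * (ε + 1)) x) :
    (L - 1) * x + 2 * (x - s) ≤ t - s := by
  have hdiv : (L + 1) * rn / L = rn + rn / L := by
    rw [add_mul, one_mul, add_comm, Nat.add_mul_div_left _ _ hL, add_comm]
  rw [hdiv] at ht
  set k := rn / L
  have hk : L * k ≤ rn := Nat.mul_div_le rn L
  have hxk : x ≤ k + (ε + 1) := by omega
  have hLx : (L - 1) * x + x = L * x := by
    rw [← Nat.succ_mul]; congr 1; omega
  have hsx : s ≤ x := hs ▸ min_le_right _ _
  suffices L * x ≤ rn + s by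
    rcases Nat.eq_zero_or_pos x with rfl | hx0
    · simp
    · omega
  obtain ⟨l, rfl⟩ : ∃ l, L = l + 1 := ⟨L - 1, by omega⟩
  simp only [Nat.add_sub_cancel] at hε
  -- `x ≤ ⌊rn/L⌋ + ε + 1`, and `(L - 1)(ε + 1) ≤ ⌊rn/L⌋` pays for the case `s = x`
  rcases le_total x ((l + 1) * (ε + 1)) with h | h
  · rw [hs, min_eq_right h]; nlinarith [Nat.mul_le_mul_left l hxk]
  · rw [hs, min_eq_left h]; nlinarith [Nat.mul_le_mul_left (l + 1) hxk]

theorem stmt_14_general (q L n rn ε : ℕ)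
    (hL : 1 ≤ L)
    (hε : (L - 1) * (ε + 1) ≤ rn / L)
    (m : ℕ) (hm : m = ((L + 1) * rn) / L + ε + 1)
    (C : Finset (Fin n → Fin q))
    (hLD : ∀ v : Fin n → Fin q,
      (C.filter (fun c => hammingDist c v ≤ rn)).card ≤ L)
    (I : Finset (Fin n)) (hI : I.card = n - m) (w : I → Fin q)
    (hbad : ∃ c₁ ∈ C, ∃ c₂ ∈ C, c₁ ≠ c₂ ∧
      (∀ i : I, c₁ i = w i) ∧ (∀ i : I, c₂ i = w i) ∧
      L * (ε + 1) ≤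
        (Finset.univ.filter (fun i : Fin n => i ∉ I ∧ c₁ i = c₂ i)).card) :
    (C.filter (fun c => ∀ i : I, c i = w i)).card ≤ L := by
  obtain ⟨c₁, hc₁, c₂, hc₂, hne, hw₁, hw₂, hagree⟩ := hbad
  by_contra! hcon
  set P : Finset (Fin n → Fin q) := {c₁, c₂}
  have hPF : P ⊆ C.filter (fun c => ∀ i : I, c i = w i) := by
    simp only [P, insert_subset_iff, singleton_subset_iff, mem_filter]
    exact ⟨⟨hc₁, hw₁⟩, hc₂, hw₂⟩
  obtain ⟨T, hPT, hTF, hTcard⟩ :=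
    exists_subsuperset_card_eq hPF (by rw [card_pair hne]; omega) hcon
  set x := n - #I - rn
  obtain ⟨S, hSJ, hScard⟩ := exists_subset_card_eq ((min_le_left _ x).trans hagree)
  have hS : ∀ i ∈ S, i ∉ I ∧ c₁ i = c₂ i := fun i hi => (mem_filter.1 (hSJ hi)).2
  have hTI : ∀ c ∈ T, Set.EqOn c c₁ I := fun c hc i hi => by
    rw [(mem_filter.1 (hTF hc)).2 ⟨i, hi⟩, hw₁ ⟨i, hi⟩]
  have hPS : ∀ c ∈ P, Set.EqOn c c₁ S := by
    simp only [P, mem_insert, mem_singleton]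
    rintro c (rfl | rfl) i hi
    exacts [rfl, (hS i hi).2.symm]
  have hroom : (#T - #P) * x + #P * (x - #S) ≤ Fintype.card (Fin n) - (#I + #S) := by
    rw [hTcard, card_pair hne, Fintype.card_fin, show L.succ - 2 = L - 1 by omega,
      ← Nat.sub_sub]
    exact sub_one_mul_add_two_mul_sub_le_sub L rn ε _ x _ hL hε (by omega) rfl hScard
  obtain ⟨v, hv⟩ := exists_hammingDist_le_of_common_agreement c₁ T P hPT I S
    (disjoint_right.2 fun i hi => (hS i hi).1) hTI hPS x (by omega) hroom
  have hTv : T ⊆ C.filter (fun c => hammingDist c v ≤ rn) := fun c hc =>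
    mem_filter.2 ⟨(mem_filter.1 (hTF hc)).1,
      (hv c hc).trans (by simp only [Fintype.card_fin]; omega)⟩
  exact absurd ((card_le_card hTv).trans (hLD v)) (by omega)

/-- Bad-vector claim: let C ⊆ [q]^n be (r,L) list-decodable, rn = La + b with
0 ≤ b < L, m = ⌊((L+1)/L)·rn⌋ + ε + 1 with (L-1)(ε+1) ≤ ⌊rn/L⌋. If
w ∈ [q]^{n-m} is bad for a set I of size n - m (two distinct codewords agree
with w on I and agree on at least L(ε+1) further coordinates outside I), then
at most L codewords c ∈ C satisfy c_I = w. -/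
theorem stmt_14 (q L n rn a b ε : ℕ) (r : ℝ)
    (hL : 1 ≤ L)
    (hr0 : 0 ≤ r) (hr1 : r < (L : ℝ) / (L + 1))
    (hrn : (rn : ℝ) = r * n)
    (hab : rn = L * a + b) (hb : b < L)
    (hε : (L - 1) * (ε + 1) ≤ rn / L)
    (m : ℕ) (hm : m = ((L + 1) * rn) / L + ε + 1)
    (C : Finset (Fin n → Fin q))
    (hLD : ∀ v : Fin n → Fin q,
      (C.filter (fun c => hammingDist c v ≤ rn)).card ≤ L)
    (I : Finset (Fin n)) (hI : I.card = n - m) (w : I → Fin q)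
    (hbad : ∃ c₁ ∈ C, ∃ c₂ ∈ C, c₁ ≠ c₂ ∧
      (∀ i : I, c₁ i = w i) ∧ (∀ i : I, c₂ i = w i) ∧
      L * (ε + 1) ≤
        (Finset.univ.filter (fun i : Fin n => i ∉ I ∧ c₁ i = c₂ i)).card) :
    (C.filter (fun c => ∀ i : I, c i = w i)).card ≤ L :=
  stmt_14_general q L n rn ε hL hε m hm C hLD I hI w hbad
end

section
/- For a prime power q, an integer 1 ≤ L < q, and r ∈ [0, L/(L+1)) with rn ∈ ℕ, if C ⊆ 𝔽_q^n is a nonzero linear (r,L) list-decodable code, then its minimum distance satisfies d(C) > rn + ⌊rn/L⌋. -/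
/-!
Let `c ∈ C` be nonzero of weight `w ≤ rn + ⌊rn/L⌋`. Then `(L + 1)(w - rn) ≤ w`, so the support
of `c` splits into `L + 1` parts of at least `w - rn` coordinates each. Pick `L + 1` distinct
scalars `α_j` and let `v` agree with `α_j • c` on the `j`-th part. The codeword `α_j • c` differs
from `v` only on the support outside part `j`, i.e. in at most `rn` coordinates, so the ball of
radius `rn` around `v` contains the `L + 1` codewords `α_j • c`.
-/

open Finset

theorem Nat.succ_mul_sub_le_of_le_add_div {L rn w : ℕ} (h : w ≤ rn + rn / L) :
    (L + 1) * (w - rn) ≤ w := by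
  have : L * (rn / L) ≤ rn := Nat.mul_div_le rn L
  have : L * w ≤ L * rn + L * (rn / L) := by rw [← Nat.mul_add]; exact Nat.mul_le_mul_left L h
  rcases Nat.le_total w rn with hw | hw
  · simp [Nat.sub_eq_zero_of_le hw]
  · obtain ⟨d, rfl⟩ := Nat.exists_eq_add_of_le hw
    simp only [Nat.add_sub_cancel_left]
    nlinarith

theorem Finset.exists_fin_fibers_card_ge {α : Type*} [DecidableEq α] :
    ∀ (k : ℕ) {m : ℕ} (s : Finset α), (k + 1) * m ≤ #s →
      ∃ f : α → Fin (k + 1), ∀ j, m ≤ #{i ∈ s | f i = j}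
  | 0, m, s, h => ⟨fun _ => 0, fun j => by simpa [Fin.fin_one_eq_zero j] using h⟩
  | k + 1, m, s, h => by
    obtain ⟨t, hts, htm⟩ := exists_subset_card_eq (s := s) (n := m)
      (le_trans (Nat.le_mul_of_pos_left m (k + 1).succ_pos) h)
    obtain ⟨f, hf⟩ := exists_fin_fibers_card_ge k (m := m) (s \ t) (by
      rw [card_sdiff_of_subset hts, htm]
      exact Nat.le_sub_of_add_le (by rwa [← Nat.succ_mul]))
    refine ⟨fun i => if i ∈ t then Fin.last (k + 1) else (f i).castSucc,
      Fin.lastCases ?_ fun j => ?_⟩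
    · refine htm ▸ card_le_card fun i hi => ?_
      simp [hts hi, hi]
    · refine (hf j).trans (card_le_card fun i hi => ?_)
      simp only [mem_filter, mem_sdiff] at hi
      simp [hi]

theorem exists_forall_hammingDist_smul_le {ι F : Type*} [Fintype ι] [MulZeroClass F]
    [DecidableEq F] {k m : ℕ} (g : Fin (k + 1) → F) (c : ι → F)
    (h : (k + 1) * m ≤ hammingNorm c) :
    ∃ v : ι → F, ∀ j, hammingDist (g j • c) v ≤ hammingNorm c - m := by
  classical
  set s : Finset ι := {i | c i ≠ 0}
  obtain ⟨f, hf⟩ := exists_fin_fibers_card_ge k s h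
  refine ⟨fun i => g (f i) * c i, fun j => ?_⟩
  have hsub : ({i | (g j • c) i ≠ g (f i) * c i} : Finset ι) ⊆ {i ∈ s | f i ≠ j} :=
    fun i hi => by
      simp only [mem_filter, mem_univ, true_and, Pi.smul_apply, smul_eq_mul, s] at hi ⊢
      exact ⟨fun hc => hi (by simp [hc]), fun hfi => hi (by rw [hfi])⟩
  calc hammingDist (g j • c) _ ≤ #{i ∈ s | f i ≠ j} := card_le_card hsub
    _ = #s - #{i ∈ s | f i = j} := by rw [filter_not, card_sdiff_of_subset (filter_subset _ _)]
    _ ≤ hammingNorm c - m := Nat.sub_le_sub_left (hf j) _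

theorem stmt_16_general (F : Type*) [Field F] [Fintype F] [DecidableEq F]
    (L n rn : ℕ) (hLq : L < Fintype.card F)
    (C : Submodule F (Fin n → F))
    (hLD : ∀ v : Fin n → F,
      {c ∈ (C : Set (Fin n → F)) | hammingDist c v ≤ rn}.ncard ≤ L) :
    ∀ c ∈ C, c ≠ 0 → rn + rn / L < hammingNorm c := by
  intro c hcC hc0
  by_contra! hw
  obtain ⟨g⟩ := Function.Embedding.nonempty_of_card_le (α := Fin (L + 1)) (β := F)
    (by simpa using hLq)
  obtain ⟨v, hv⟩ :=
    exists_forall_hammingDist_smul_le g c (Nat.succ_mul_sub_le_of_le_add_div hw)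
  have hinj : Function.Injective fun j => g j • c :=
    fun a b hab => g.injective (smul_left_injective F hc0 hab)
  have hball : Set.range (fun j => g j • c) ⊆
      {c' ∈ (C : Set (Fin n → F)) | hammingDist c' v ≤ rn} := by
    rintro _ ⟨j, rfl⟩
    exact ⟨C.smul_mem _ hcC, (hv j).trans (by omega)⟩
  have hcard := Set.ncard_le_ncard hball (Set.toFinite _)
  rw [Set.ncard_range_of_injective hinj, Nat.card_eq_fintype_card, Fintype.card_fin] at hcard
  exact absurd (hLD v) (by omega)

/-- For a finite field F with q elements, 1 ≤ L < q, r ∈ [0, L/(L+1)) with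
rn ∈ ℕ: a nonzero linear (r,L) list-decodable code C ⊆ F^n has minimum
distance d(C) > rn + ⌊rn/L⌋. -/
theorem stmt_16 (F : Type*) [Field F] [Fintype F] [DecidableEq F]
    (L n rn : ℕ) (r : ℝ)
    (hL1 : 1 ≤ L) (hLq : L < Fintype.card F)
    (hr0 : 0 ≤ r) (hr1 : r < (L : ℝ) / (L + 1))
    (hrn : (rn : ℝ) = r * n)
    (C : Submodule F (Fin n → F)) (hC : C ≠ ⊥)
    (hLD : ∀ v : Fin n → F,
      {c ∈ (C : Set (Fin n → F)) | hammingDist c v ≤ rn}.ncard ≤ L) :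
    ∀ c ∈ C, c ≠ 0 → rn + rn / L < hammingNorm c :=
  stmt_16_general F L n rn hLq C hLD
end

section
/- For a prime power q, an integer 1 ≤ L < q, and r ∈ [0, L/(L+1)) with rn ∈ ℕ, any linear [n,k]_q code that is (r,L) list-decodable with k = n - ⌈((L+1)/L)·rn⌉ has minimum distance at least n - k; moreover, if L divides rn, its minimum distance is at least n - k + 1, so it is an MDS code. -/
/-!
If a nonzero codeword `c` of weight `w` had `L * w ≤ (L + 1) * rn`, split its support into
`L + 1` parts of size at least `w - rn` and let `v` agree with `aᵢ • c` on the `i`-th part, for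
`L + 1` distinct scalars `aᵢ` (there are enough since `L < q`). Then every `aᵢ • c` differs
from `v` only off its own part, so in at most `rn` positions, and the ball of radius `rn` around
`v` holds `L + 1` codewords. Hence every nonzero codeword has weight `> (L + 1) rn / L`, i.e. at
least `⌈(L + 1) rn / L⌉ = n - k`, and strictly more when `L ∣ rn`.
-/

open Finset

theorem Finset.exists_fun_fin_le_card_filter_eq {ι : Type*} [DecidableEq ι] (s : ℕ) :
    ∀ (m : ℕ) (S : Finset ι), (m + 1) * s ≤ #S →
      ∃ f : ι → Fin (m + 1), ∀ i, s ≤ #{j ∈ S | f j = i}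
  | 0, S, hS => ⟨fun _ => 0, fun i => by obtain rfl := Fin.fin_one_eq_zero i; simpa using hS⟩
  | m + 1, S, hS => by
    obtain ⟨T, hTS, hT⟩ := exists_subset_card_eq (s := S) (n := s) (by nlinarith)
    obtain ⟨g, hg⟩ := exists_fun_fin_le_card_filter_eq s m (S \ T) (by
      rw [card_sdiff_of_subset hTS, hT]
      have : (m + 1 + 1) * s = (m + 1) * s + s := by ring
      omega)
    refine ⟨fun j => if j ∈ T then 0 else (g j).succ, Fin.cases ?_ fun i => ?_⟩
    · calc s = #T := hT.symm
        _ ≤ _ := card_le_card fun j hj => by simp [hTS hj, hj]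
    · calc s ≤ #{j ∈ S \ T | g j = i} := hg i
        _ ≤ _ := card_le_card fun j hj => by
          simp only [mem_filter, mem_sdiff] at hj
          simp [hj]

section Coding

variable {ι : Type*} [Fintype ι]

theorem exists_hammingDist_smul_le {R : Type*} [MulZeroClass R] [DecidableEq R] (c : ι → R)
    (m rn : ℕ) (a : Fin (m + 1) → R)
    (hc : (m + 1) * (hammingNorm c - rn) ≤ hammingNorm c) :
    ∃ v : ι → R, ∀ i, hammingDist (a i • c) v ≤ rn := by
  classical
  set S : Finset ι := {j | c j ≠ 0}
  obtain ⟨f, hf⟩ := exists_fun_fin_le_card_filter_eq (hammingNorm c - rn) m S hc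
  refine ⟨fun j => a (f j) * c j, fun i => ?_⟩
  have hsplit := card_filter_add_card_filter_not (s := S) (fun j => f j = i)
  calc hammingDist (a i • c) (fun j => a (f j) * c j) ≤ #{j ∈ S | ¬f j = i} :=
        card_le_card fun j hj => by
          simp only [mem_filter, mem_univ, true_and, Pi.smul_apply, smul_eq_mul, S] at hj ⊢
          exact ⟨fun h => hj (by simp [h]), fun h => hj (by rw [h])⟩
    _ ≤ rn := by
        have := hf i
        change _ = hammingNorm c at hsplit
        omega

theorem Submodule.mul_lt_mul_hammingNorm_of_ncard_ball_le {F : Type*} [DivisionRing F]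
    [Fintype F] [DecidableEq F] (C : Submodule F (ι → F))
    (L rn : ℕ) (hLq : L < Fintype.card F)
    (hLD : ∀ v : ι → F, {c ∈ (C : Set (ι → F)) | hammingDist c v ≤ rn}.ncard ≤ L)
    {c : ι → F} (hc : c ∈ C) (hc0 : c ≠ 0) :
    (L + 1) * rn < L * hammingNorm c := by
  by_contra! hle
  have hsplit : (L + 1) * (hammingNorm c - rn) ≤ hammingNorm c := by
    rcases le_or_gt (hammingNorm c) rn with h | h
    · simp [Nat.sub_eq_zero_of_le h]
    · obtain ⟨d, hd⟩ := Nat.exists_eq_add_of_lt h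
      rw [hd] at hle ⊢
      rw [show rn + d + 1 - rn = d + 1 by omega]
      nlinarith
  obtain ⟨e⟩ : Nonempty (Fin (L + 1) ↪ F) :=
    Function.Embedding.nonempty_of_card_le (by simpa using hLq)
  obtain ⟨v, hv⟩ := exists_hammingDist_smul_le c L rn e hsplit
  have hinj : Function.Injective fun i => e i • c :=
    (smul_left_injective F hc0).comp e.injective
  have hsub :
      Set.range (fun i => e i • c) ⊆ {c ∈ (C : Set (ι → F)) | hammingDist c v ≤ rn} := by
    rintro _ ⟨i, rfl⟩
    exact ⟨C.smul_mem _ hc, hv i⟩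
  have := (Set.ncard_le_ncard hsub (Set.toFinite _)).trans (hLD v)
  rw [Set.ncard_range_of_injective hinj, Nat.card_eq_fintype_card, Fintype.card_fin] at this
  omega

end Coding

theorem Nat.add_pred_div_le_of_lt_mul {a L w : ℕ} (h : a < L * w) : (a + L - 1) / L ≤ w := by
  have hL : 0 < L := Nat.pos_of_ne_zero (by rintro rfl; simp at h)
  rw [← Nat.lt_succ_iff, Nat.div_lt_iff_lt_mul hL, Nat.succ_mul, Nat.mul_comm]
  omega

theorem Nat.add_pred_div_lt_of_dvd_of_lt_mul {a L w : ℕ} (hdvd : L ∣ a) (h : a < L * w) :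
    (a + L - 1) / L < w := by
  obtain ⟨t, rfl⟩ := hdvd
  have hL : 0 < L := Nat.pos_of_ne_zero (by rintro rfl; simp at h)
  rw [Nat.add_sub_assoc hL, Nat.mul_add_div hL, Nat.div_eq_of_lt (by omega), Nat.add_zero]
  exact Nat.lt_of_mul_lt_mul_left h

theorem stmt_17_general (F : Type*) [Field F] [Fintype F] [DecidableEq F]
    (L n rn k : ℕ)
    (hLq : L < Fintype.card F)
    (hk : k = n - ((L + 1) * rn + L - 1) / L)
    (C : Submodule F (Fin n → F))
    (hLD : ∀ v : Fin n → F,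
      {c ∈ (C : Set (Fin n → F)) | hammingDist c v ≤ rn}.ncard ≤ L) :
    (∀ c ∈ C, c ≠ 0 → n - k ≤ hammingNorm c) ∧
      (L ∣ rn → ∀ c ∈ C, c ≠ 0 → n - k + 1 ≤ hammingNorm c) := by
  have hweight {c} (hc : c ∈ C) (hc0 : c ≠ 0) :=
    C.mul_lt_mul_hammingNorm_of_ncard_ball_le L rn hLq hLD hc hc0
  subst hk
  generalize hm : ((L + 1) * rn + L - 1) / L = m
  refine ⟨fun c hc hc0 => ?_, fun hdvd c hc hc0 => ?_⟩
  · have := hm ▸ Nat.add_pred_div_le_of_lt_mul (hweight hc hc0)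
    omega
  · have := hm ▸ Nat.add_pred_div_lt_of_dvd_of_lt_mul (hdvd.mul_left _) (hweight hc hc0)
    omega

/-- For a finite field F with q elements, 1 ≤ L < q, r ∈ [0, L/(L+1)) with
rn ∈ ℕ: any linear [n,k] code over F that is (r,L) list-decodable with
k = n - ⌈((L+1)/L)·rn⌉ has minimum distance at least n - k; moreover, if
L ∣ rn its minimum distance is at least n - k + 1, i.e. it is MDS. -/
theorem stmt_17 (F : Type*) [Field F] [Fintype F] [DecidableEq F]
    (L n rn k : ℕ) (r : ℝ)
    (hL1 : 1 ≤ L) (hLq : L < Fintype.card F)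
    (hr0 : 0 ≤ r) (hr1 : r < (L : ℝ) / (L + 1))
    (hrn : (rn : ℝ) = r * n)
    (hk : k = n - ((L + 1) * rn + L - 1) / L)
    (C : Submodule F (Fin n → F)) (hdim : Module.finrank F C = k)
    (hLD : ∀ v : Fin n → F,
      {c ∈ (C : Set (Fin n → F)) | hammingDist c v ≤ rn}.ncard ≤ L) :
    (∀ c ∈ C, c ≠ 0 → n - k ≤ hammingNorm c) ∧
      (L ∣ rn → ∀ c ∈ C, c ≠ 0 → n - k + 1 ≤ hammingNorm c) :=
  stmt_17_general F L n rn k hLq hk C hLD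
end
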